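/- arXiv:2110.02013 — 4 statements merged into one kernel-verified Lean document; each statement's English description precedes it below -/
import Mathlib

section
/- Let B be a brace, C a cycle of length four in B, and P1, P2 two paths that form a conformal cross over C. Then for every edge e ∈ E(C), the graph C + P1 + P2 (the union of C, P1 and P2 as a subgraph of B) has a perfect matching M_e such that M_e ∩ E(C) = {e}. -/
namespace Paper

open SimpleGraph

variable {V : Type*} {W : Type*}

/-- `M` is a perfect matching of the vertex set `S` in the graph `G`:
a set of pairwise disjoint edges of `G`, all within `S`, covering every vertex of `S`. -/
def IsPMOn (G : SimpleGraph V) (S : Set V) (M : Set (Sym2 V)) : Prop :=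
  (∀ e ∈ M, e ∈ G.edgeSet) ∧ (∀ e ∈ M, ∀ v ∈ e, v ∈ S) ∧
    ∀ v ∈ S, ∃! e, e ∈ M ∧ v ∈ e

/-- `M` is a perfect matching of `G`. -/
def IsPM (G : SimpleGraph V) (M : Set (Sym2 V)) : Prop :=
  IsPMOn G Set.univ M

/-- The edges in `F` are pairwise vertex-disjoint. -/
def PairwiseDisjointEdges (F : Set (Sym2 V)) : Prop :=
  ∀ e ∈ F, ∀ f ∈ F, e ≠ f → ∀ x : V, x ∈ e → x ∉ f

/-- All edges of `G` have both endpoints in `S`. -/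
def EdgesWithin (G : SimpleGraph V) (S : Set V) : Prop :=
  ∀ ⦃x y : V⦄, G.Adj x y → x ∈ S ∧ y ∈ S

def ConnectedOn (G : SimpleGraph V) (S : Set V) : Prop :=
  S.Nonempty ∧ ∀ x ∈ S, ∀ y ∈ S, G.Reachable x y

/-- The graph `G` with vertex set `S` is a brace: it is connected and every matching of
size at most two extends to a perfect matching. -/
def IsBraceOn (G : SimpleGraph V) (S : Set V) : Prop :=
  EdgesWithin G S ∧ ConnectedOn G S ∧
    ∀ F : Set (Sym2 V), F ⊆ G.edgeSet → PairwiseDisjointEdges F → F.ncard ≤ 2 →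
      ∃ M, IsPMOn G S M ∧ F ⊆ M

def IsBrace (G : SimpleGraph V) : Prop :=
  IsBraceOn G Set.univ

def IsBipartitionOf (G : SimpleGraph V) (V1 V2 : Set V) : Prop :=
  Disjoint V1 V2 ∧ V1 ∪ V2 = Set.univ ∧ ∀ ⦃x y : V⦄, G.Adj x y → (x ∈ V1 ↔ y ∈ V2)

def IsBipartite (G : SimpleGraph V) : Prop :=
  ∃ V1 V2 : Set V, IsBipartitionOf G V1 V2

def MatchingCoveredOn (G : SimpleGraph V) (S : Set V) : Prop :=
  EdgesWithin G S ∧ ConnectedOn G S ∧ ∀ e ∈ G.edgeSet, ∃ M, IsPMOn G S M ∧ e ∈ M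

def MatchingCovered (G : SimpleGraph V) : Prop :=
  MatchingCoveredOn G Set.univ

/-- Every vertex of `A` is covered exactly once by an edge of `M ∩ Es`;
i.e. `M ∩ Es` is a perfect matching of the subgraph with vertex set `A` and edge set `Es`. -/
def MatchesExactly (M Es : Set (Sym2 V)) (A : Set V) : Prop :=
  ∀ v ∈ A, ∃! e, e ∈ M ∧ e ∈ Es ∧ v ∈ e

/-- `M` restricted to the edges of `P` with both endpoints in `A` is a
perfect matching of `A`; i.e. `M ∩ E(P ∩ A)` is a perfect matching of `P ∩ A`. -/
def WalkMConfOn (G : SimpleGraph V) (M : Set (Sym2 V)) {u v : V} (P : G.Walk u v)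
    (A : Set V) : Prop :=
  ∀ x ∈ A, ∃! e : Sym2 V, e ∈ M ∧ e ∈ P.edges ∧ (∀ y ∈ e, y ∈ A) ∧ x ∈ e

/-- The path `P` is `M`-conformal: `M ∩ E(P)` is a perfect matching of `P`. -/
def MConformalWalk (G : SimpleGraph V) (M : Set (Sym2 V)) {u v : V} (P : G.Walk u v) : Prop :=
  WalkMConfOn G M P {x | x ∈ P.support}

/-- The path `P` is internally `M`-conformal: removing both endpoints leaves
an `M`-conformal path. -/
def InternallyMConformal (G : SimpleGraph V) (M : Set (Sym2 V)) {u v : V}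
    (P : G.Walk u v) : Prop :=
  WalkMConfOn G M P {x | x ∈ P.support ∧ x ≠ u ∧ x ≠ v}

/-- The path `P` is `M`-alternating: there is a set `S` of endpoints of `P`
such that `P − S` is `M`-conformal. -/
def MAlternating (G : SimpleGraph V) (M : Set (Sym2 V)) {u v : V} (P : G.Walk u v) : Prop :=
  ∃ S ⊆ ({u, v} : Set V), WalkMConfOn G M P {x | x ∈ P.support ∧ x ∉ S}

/-- The cycle `C` is `M`-conformal: `M ∩ E(C)` is a perfect matching of `C`. -/
def MConformalCycle (G : SimpleGraph V) (M : Set (Sym2 V)) {c : V} (C : G.Walk c c) : Prop :=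
  ∀ x ∈ C.support, ∃! e, e ∈ M ∧ e ∈ C.edges ∧ x ∈ e

/-- The cycle `C` is conformal in the graph `G` with vertex set `S`:
`G − V(C)` has a perfect matching. -/
def ConformalCycleOn (G : SimpleGraph V) (S : Set V) {c : V} (C : G.Walk c c) : Prop :=
  ∃ M, IsPMOn G (S \ {x | x ∈ C.support}) M

def ConformalCycle (G : SimpleGraph V) {c : V} (C : G.Walk c c) : Prop :=
  ConformalCycleOn G Set.univ C

/-- The four vertices appear on the cycle `C` in the listed cyclic order. -/
def InCyclicOrder (G : SimpleGraph V) {c : V} (C : G.Walk c c) (s1 s2 t1 t2 : V) : Prop :=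
  ∃ n : ℕ, List.Sublist [s1, s2, t1, t2] (C.support.tail.rotate n) ∨
    List.Sublist [s1, s2, t1, t2] (C.support.tail.reverse.rotate n)

/-- The paths `P1` (from `s1` to `t1`) and `P2` (from `s2` to `t2`) form a matching
cross over the cycle `C` with respect to the perfect matching `M` of `(G, S)`. -/
def IsMatchingCrossOn (G : SimpleGraph V) (S : Set V) {c s1 t1 s2 t2 : V}
    (C : G.Walk c c) (M : Set (Sym2 V)) (P1 : G.Walk s1 t1) (P2 : G.Walk s2 t2) : Prop :=
  IsPMOn G S M ∧ [s1, s2, t1, t2].Nodup ∧ InCyclicOrder G C s1 s2 t1 t2 ∧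
    P1.IsPath ∧ P2.IsPath ∧ MAlternating G M P1 ∧ MAlternating G M P2 ∧
    (∀ x : V, x ∈ P1.support → x ∉ P2.support) ∧
    (∀ x ∈ P1.support, x ≠ s1 → x ≠ t1 → x ∉ C.support) ∧
    (∀ x ∈ P2.support, x ≠ s2 → x ≠ t2 → x ∉ C.support)

def HasMatchingCrossOn (G : SimpleGraph V) (S : Set V) {c : V} (C : G.Walk c c) : Prop :=
  ∃ (M : Set (Sym2 V)) (s1 t1 s2 t2 : V) (P1 : G.Walk s1 t1) (P2 : G.Walk s2 t2),
    IsMatchingCrossOn G S C M P1 P2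

def HasMatchingCross (G : SimpleGraph V) {c : V} (C : G.Walk c c) : Prop :=
  HasMatchingCrossOn G Set.univ C

/-- `C + P1 + P2` is a conformal subgraph of `(G, S)`. -/
def CrossConformalOn (G : SimpleGraph V) (S : Set V) {c s1 t1 s2 t2 : V}
    (C : G.Walk c c) (P1 : G.Walk s1 t1) (P2 : G.Walk s2 t2) : Prop :=
  ∃ N, IsPMOn G S N ∧
    MatchesExactly N
      ({f | f ∈ C.edges} ∪ {f | f ∈ P1.edges} ∪ {f | f ∈ P2.edges})
      ({x | x ∈ C.support} ∪ {x | x ∈ P1.support} ∪ {x | x ∈ P2.support})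

/-- There is a conformal cross over the cycle `C` in `G`. -/
def HasConformalCross (G : SimpleGraph V) {c : V} (C : G.Walk c c) : Prop :=
  ∃ (M : Set (Sym2 V)) (s1 t1 s2 t2 : V) (P1 : G.Walk s1 t1) (P2 : G.Walk s2 t2),
    IsMatchingCrossOn G Set.univ C M P1 P2 ∧ CrossConformalOn G Set.univ C P1 P2

/-- A bisubdivision of the graph `H` inside the graph `G`: every edge of `H` is replaced
by a path of odd length (i.e., subdivided an even number of times), and those paths
pairwise meet only in branch vertices. -/
structure Bisubdivision (H : SimpleGraph W) (G : SimpleGraph V) where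
  bv : W → V
  bv_inj : Function.Injective bv
  link : ∀ ⦃x y : W⦄, H.Adj x y → G.Walk (bv x) (bv y)
  link_isPath : ∀ ⦃x y : W⦄ (h : H.Adj x y), (link h).IsPath
  link_odd : ∀ ⦃x y : W⦄ (h : H.Adj x y), Odd (link h).length
  link_symm : ∀ ⦃x y : W⦄ (h : H.Adj x y), link h.symm = (link h).reverse
  link_branch : ∀ ⦃x y : W⦄ (h : H.Adj x y) (z : W), bv z ∈ (link h).support → z = x ∨ z = y
  link_meet : ∀ ⦃x y x' y' : W⦄ (h : H.Adj x y) (h' : H.Adj x' y'), s(x, y) ≠ s(x', y') →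
    ∀ v : V, v ∈ (link h).support → v ∈ (link h').support →
      (v = bv x ∨ v = bv y) ∧ (v = bv x' ∨ v = bv y')

def Bisubdivision.verts {H : SimpleGraph W} {G : SimpleGraph V}
    (L : Bisubdivision H G) : Set V :=
  {v | ∃ (x y : W) (h : H.Adj x y), v ∈ (L.link h).support}

def Bisubdivision.edgeSet {H : SimpleGraph W} {G : SimpleGraph V}
    (L : Bisubdivision H G) : Set (Sym2 V) :=
  {e | ∃ (x y : W) (h : H.Adj x y), e ∈ (L.link h).edges}

/-- The bisubdivision `L` is an `M`-conformal subgraph of `G`. -/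
def Bisubdivision.MConformal {H : SimpleGraph W} {G : SimpleGraph V}
    (L : Bisubdivision H G) (M : Set (Sym2 V)) : Prop :=
  MatchesExactly M L.edgeSet L.verts

/-- The bisubdivision `L` is a conformal subgraph of `(G, S)`. -/
def Bisubdivision.ConformalOn {H : SimpleGraph W} {G : SimpleGraph V}
    (L : Bisubdivision H G) (S : Set V) : Prop :=
  ∃ M, IsPMOn G S M ∧ L.MConformal M

abbrev K33 : SimpleGraph (Fin 3 ⊕ Fin 3) := completeBipartiteGraph (Fin 3) (Fin 3)

/-- `G` contains a conformal bisubdivision of `K_{3,3}`. -/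
def ContainsK33 (G : SimpleGraph V) : Prop :=
  ∃ L : Bisubdivision K33 G, L.ConformalOn Set.univ

def K33Free (G : SimpleGraph V) : Prop :=
  ¬ ContainsK33 G

def C4verts (a1 b1 a2 b2 : V) : Set V := {a1, b1, a2, b2}

def C4edges (a1 b1 a2 b2 : V) : Set (Sym2 V) := {s(a1, b1), s(b1, a2), s(a2, b2), s(b2, a1)}

/-- `a1 b1 a2 b2` is a cycle of length four in `G`. -/
def IsC4In (G : SimpleGraph V) (a1 b1 a2 b2 : V) : Prop :=
  [a1, b1, a2, b2].Nodup ∧ G.Adj a1 b1 ∧ G.Adj b1 a2 ∧ G.Adj a2 b2 ∧ G.Adj b2 a1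

/-- `B` is a 4-cycle sum of the graphs `Bi i` (with vertex sets `Si i`)
at the common conformal 4-cycle `a1 b1 a2 b2`. -/
def IsFourCycleSum {ℓ : ℕ} (B : SimpleGraph V) (Bi : Fin ℓ → SimpleGraph V)
    (Si : Fin ℓ → Set V) (a1 b1 a2 b2 : V) : Prop :=
  (∀ i, EdgesWithin (Bi i) (Si i)) ∧
  (∀ i, IsC4In (Bi i) a1 b1 a2 b2) ∧
  (∀ i, ∃ M, IsPMOn (Bi i) (Si i \ C4verts a1 b1 a2 b2) M) ∧
  (∀ i j, i ≠ j → Si i ∩ Si j = C4verts a1 b1 a2 b2) ∧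
  (⋃ i, Si i) = Set.univ ∧
  ∃ D ⊆ C4edges a1 b1 a2 b2, B.edgeSet = (⋃ i, (Bi i).edgeSet) \ D

/-- `B` is a maximal 4-cycle sum of the braces `Bi i` at the 4-cycle `a1 b1 a2 b2`. -/
def IsMaxFourCycleSumOfBraces {ℓ : ℕ} (B : SimpleGraph V) (Bi : Fin ℓ → SimpleGraph V)
    (Si : Fin ℓ → Set V) (a1 b1 a2 b2 : V) : Prop :=
  IsFourCycleSum B Bi Si a1 b1 a2 b2 ∧ (∀ i, IsBraceOn (Bi i) (Si i)) ∧
    ¬ ∃ ℓ' : ℕ, ℓ < ℓ' ∧ ∃ (Hi : Fin ℓ' → SimpleGraph V) (Ti : Fin ℓ' → Set V),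
      IsFourCycleSum B Hi Ti a1 b1 a2 b2 ∧ ∀ i, IsBraceOn (Hi i) (Ti i)

/-- `∂(X)`: the set of edges of `G` with exactly one endpoint in `X`. -/
def edgeCut (G : SimpleGraph V) (X : Set V) : Set (Sym2 V) :=
  {e | e ∈ G.edgeSet ∧ ∃ x y : V, e = s(x, y) ∧ x ∈ X ∧ y ∉ X}

/-- `∂(X)` is a tight cut of the graph `G` with vertex set `S`. -/
def IsTightCutOn (G : SimpleGraph V) (S X : Set V) : Prop :=
  ∀ M, IsPMOn G S M → (edgeCut G X ∩ M).ncard = 1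

def IsTightCut (G : SimpleGraph V) (X : Set V) : Prop :=
  IsTightCutOn G Set.univ X

/-- The minority of `X` with respect to the colour classes `V1`, `V2`. -/
noncomputable def minority (V1 V2 X : Set V) : Set V :=
  if (X ∩ V1).ncard < (X ∩ V2).ncard then X ∩ V1 else X ∩ V2

/-- `P1` and `P2` are `M`-alternating paths of the same type. -/
def SameType (G : SimpleGraph V) (M : Set (Sym2 V)) {s1 t1 s2 t2 : V}
    (P1 : G.Walk s1 t1) (P2 : G.Walk s2 t2) : Prop :=
  (InternallyMConformal G M P1 ∧ InternallyMConformal G M P2) ∨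
  (MConformalWalk G M P1 ∧ MConformalWalk G M P2) ∨
  ((¬ InternallyMConformal G M P1 ∧ ¬ MConformalWalk G M P1) ∧
    (¬ InternallyMConformal G M P2 ∧ ¬ MConformalWalk G M P2))

/-- There is a strong matching cross over `C` in `(G, S)` w.r.t. colour classes `V1, V2`. -/
def HasStrongMatchingCrossOn (G : SimpleGraph V) (S V1 V2 : Set V) {c : V}
    (C : G.Walk c c) : Prop :=
  ∃ (M : Set (Sym2 V)) (s1 t1 s2 t2 : V) (P1 : G.Walk s1 t1) (P2 : G.Walk s2 t2),
    IsMatchingCrossOn G S C M P1 P2 ∧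
    (V1 ∩ {s1, s2, t1, t2}).ncard = (V2 ∩ {s1, s2, t1, t2}).ncard ∧
    SameType G M P1 P2

/-- `s1 s2 t1 t2` appear in this cyclic order on the 4-cycle `a1 b1 a2 b2`. -/
def CyclicOrderC4 (a1 b1 a2 b2 s1 s2 t1 t2 : V) : Prop :=
  ∃ n : ℕ, [s1, s2, t1, t2] = [a1, b1, a2, b2].rotate n ∨
    [s1, s2, t1, t2] = [b2, a2, b1, a1].rotate n

/-- `P1, P2` form a matching cross over the 4-cycle `a1 b1 a2 b2` w.r.t. `M`. -/
def IsCrossOverC4 (G : SimpleGraph V) (M : Set (Sym2 V)) (a1 b1 a2 b2 : V)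
    {s1 t1 s2 t2 : V} (P1 : G.Walk s1 t1) (P2 : G.Walk s2 t2) : Prop :=
  [s1, s2, t1, t2].Nodup ∧ CyclicOrderC4 a1 b1 a2 b2 s1 s2 t1 t2 ∧
    P1.IsPath ∧ P2.IsPath ∧ MAlternating G M P1 ∧ MAlternating G M P2 ∧
    (∀ z : V, z ∈ P1.support → z ∉ P2.support) ∧
    (∀ z ∈ P1.support, z ≠ s1 → z ≠ t1 → z ∉ C4verts a1 b1 a2 b2) ∧
    (∀ z ∈ P2.support, z ≠ s2 → z ≠ t2 → z ∉ C4verts a1 b1 a2 b2)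

/-- The Heawood graph on `ZMod 14`. -/
def heawood : SimpleGraph (ZMod 14) :=
  SimpleGraph.fromRel fun i j => j = i + 1 ∨ (Even i.val ∧ j = i + 5)

/-- The Rotunda: three cubes glued along a common 4-cycle whose edges are then deleted. -/
def rotunda : SimpleGraph (Fin 4 ⊕ Fin 3 × Fin 4) :=
  SimpleGraph.fromRel fun x y =>
    match x, y with
    | Sum.inl j, Sum.inr p => j = p.2
    | Sum.inr p, Sum.inr q => p.1 = q.1 ∧ q.2 = p.2 + 1
    | _, _ => False

/-- `F` is an `S`-cover in `G`. -/
def IsSCover (G : SimpleGraph V) (S : Set V) (F : Set (Sym2 V)) : Prop :=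
  F ⊆ G.edgeSet ∧ (∀ e ∈ F, ∃ v ∈ S, v ∈ e) ∧ ∀ v ∈ S, ∃ e ∈ F, v ∈ e

/-- `F` is contained in some perfect matching of `G`. -/
def Extendible (G : SimpleGraph V) (F : Set (Sym2 V)) : Prop :=
  ∃ M, IsPM G M ∧ F ⊆ M

/-- `(G, S)` is an `F`-instance of 2-MLP for `(a1, a2)` and `(b1, b2)`. -/
def TwoMLPInstanceOn (G : SimpleGraph V) (S : Set V) (a1 a2 b1 b2 : V)
    (F : Set (Sym2 V)) : Prop :=
  ∃ M, IsPMOn G S M ∧ F ⊆ M ∧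
    ∃ (P1 : G.Walk a1 b1) (P2 : G.Walk a2 b2), P1.IsPath ∧ P2.IsPath ∧
      InternallyMConformal G M P1 ∧ InternallyMConformal G M P2 ∧
      ∀ x : V, x ∈ P1.support → x ∉ P2.support

/-- `B − u − v + pq`: delete the vertices `u, v` and add the edge `pq`. -/
def deleteAdd (B : SimpleGraph V) (u v p q : V) : SimpleGraph V :=
  SimpleGraph.fromRel fun x y =>
    (B.Adj x y ∨ (x = p ∧ y = q)) ∧ x ≠ u ∧ x ≠ v ∧ y ≠ u ∧ y ≠ v

/-- `B` plus two new vertices `x = Sum.inr 0` and `y = Sum.inr 1` together with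
the edges `xy, x b1, x b2, y a1, y a2`. -/
def plusXY (B : SimpleGraph V) (a1 a2 b1 b2 : V) : SimpleGraph (V ⊕ Fin 2) :=
  SimpleGraph.fromRel fun p q =>
    (∃ a b : V, p = Sum.inl a ∧ q = Sum.inl b ∧ B.Adj a b) ∨
    (p = Sum.inr 0 ∧ q = Sum.inr 1) ∨
    (p = Sum.inr 0 ∧ (q = Sum.inl b1 ∨ q = Sum.inl b2)) ∨
    (p = Sum.inr 1 ∧ (q = Sum.inl a1 ∨ q = Sum.inl a2))

/-- The endpoints `q1, q2` (on the 4-cycle) belong to the same colour class. -/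
def PrecrossDaring (V1 V2 : Set V) (q1 q2 : V) : Prop :=
  (q1 ∈ V1 ∧ q2 ∈ V1) ∨ (q1 ∈ V2 ∧ q2 ∈ V2)

/-- `(P1, P2, Q, M)` is a diffuse `C'`-`M`-precross through the 4-cycle `a1 b1 a2 b2`
in the graph `G` with vertex set `S` and colour classes `V1, V2`. -/
def DiffusePrecross (G : SimpleGraph V) (S V1 V2 : Set V) (a1 b1 a2 b2 : V)
    {c p1 q1 p2 q2 x1 x2 : V} (C' : G.Walk c c) (M : Set (Sym2 V))
    (P1 : G.Walk p1 q1) (P2 : G.Walk p2 q2) (Q : G.Walk x1 x2) : Prop :=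
  IsPMOn G S M ∧ P1.IsPath ∧ P2.IsPath ∧ Q.IsPath ∧
  MAlternating G M P1 ∧ MAlternating G M P2 ∧ MAlternating G M Q ∧
  (∀ z : V, z ∈ P1.support → z ∉ P2.support) ∧
  (∀ z : V, z ∈ P1.support → z ∉ Q.support) ∧
  (∀ z : V, z ∈ P2.support → z ∉ Q.support) ∧
  (∀ z ∈ P1.support, z ≠ p1 → z ≠ q1 → z ∉ C'.support) ∧
  (∀ z ∈ P2.support, z ≠ p2 → z ≠ q2 → z ∉ C'.support) ∧
  (∀ z ∈ Q.support, z ≠ x1 → z ≠ x2 → z ∉ C'.support) ∧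
  x1 ∈ C'.support ∧ x2 ∈ C'.support ∧
  p1 ∈ C'.support ∧ q1 ∈ C4verts a1 b1 a2 b2 ∧
  p2 ∈ C'.support ∧ q2 ∈ C4verts a1 b1 a2 b2 ∧
  (∀ Wk : G.Walk p1 p2, (∀ e ∈ Wk.edges, e ∈ C'.edges) → ∃ z ∈ Wk.support, z ∈ Q.support) ∧
  (∀ U ∈ ({V1, V2} : Set (Set V)), (q1 ∈ U ∨ q2 ∈ U) →
    ∃ q : V, (q = q1 ∨ q = q2) ∧ q ∈ U ∧ ∃ e ∈ M, e ∈ C4edges a1 b1 a2 b2 ∧ q ∈ e)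

/-- A daring diffuse precross is successful. -/
def PrecrossSuccessful (G : SimpleGraph V) (V1 V2 : Set V) (M : Set (Sym2 V))
    {p1 q1 p2 q2 : V} (P1 : G.Walk p1 q1) (P2 : G.Walk p2 q2) : Prop :=
  PrecrossDaring V1 V2 q1 q2 ∧
  ((InternallyMConformal G M P1 ∧ MConformalWalk G M P2) ∨
   (InternallyMConformal G M P2 ∧ MConformalWalk G M P1) ∨
   (Even P1.length ∧ Even P2.length ∧
     ((∃ e ∈ M, e ∈ P1.edges ∧ p1 ∈ e) ↔ ¬ ∃ e ∈ M, e ∈ P2.edges ∧ p2 ∈ e)))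


section Statement5Aux

variable {G : SimpleGraph V}

/-- Alternate edges of a walk starting with the first edge. -/
def altMatch : {u v : V} → G.Walk u v → Set (Sym2 V)
  | _, _, .nil => ∅
  | u, v, .cons _ .nil => {s(u, v)}
  | u, _, .cons (v := x) _ (.cons _ q) => insert s(u, x) (altMatch q)

/-- Alternate edges of a walk starting with the second edge. -/
def skipMatch : {u v : V} → G.Walk u v → Set (Sym2 V)
  | _, _, .nil => ∅
  | _, _, .cons _ q => altMatch q

lemma mem_support_of_mem_edges' {u v y : V} (p : G.Walk u v) {f : Sym2 V}
    (hf : f ∈ p.edges) (hy : y ∈ f) : y ∈ p.support := by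
  obtain ⟨z, rfl⟩ := Sym2.mem_iff_exists.1 hy
  exact p.fst_mem_support_of_mem_edges hf

lemma altMatch_subset_edges {u v : V} (p : G.Walk u v) :
    ∀ f ∈ altMatch p, f ∈ p.edges := by
  induction p using altMatch.induct with
  | case1 => simp [altMatch]
  | case2 => simp [altMatch]
  | case3 u vend x h1 y h2 q ih =>
    intro f hf
    rcases hf with rfl | hf
    · simp [Walk.edges_cons]
    · simp only [Walk.edges_cons, List.mem_cons]
      exact Or.inr (Or.inr (ih f hf))

lemma altMatch_cover {u v : V} (p : G.Walk u v) (hodd : Odd p.length)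
    (hp : p.IsPath) : ∀ z ∈ p.support, ∃! f, f ∈ altMatch p ∧ z ∈ f := by
  induction p using altMatch.induct with
  | case1 x => simp [Walk.length_nil, Nat.odd_iff] at hodd
  | case2 u v h =>
    intro z hz
    simp only [Walk.support_cons, Walk.support_nil, List.mem_cons,
      List.not_mem_nil, or_false] at hz
    refine ⟨s(u, v), ⟨rfl, ?_⟩, ?_⟩
    · rcases hz with rfl | rfl <;> simp
    · rintro f ⟨hf, -⟩; simpa [altMatch] using hf
  | case3 u vend x h1 y h2 q ih =>
    have hoddq : Odd q.length := by
      simp only [Walk.length_cons] at hodd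
      rcases hodd with ⟨k, hk⟩
      exact ⟨k - 1, by omega⟩
    have hq : q.IsPath := (hp.of_cons).of_cons
    have hu : u ∉ q.support := by
      have := hp.support_nodup
      simp only [Walk.support_cons, List.nodup_cons] at this
      exact fun hc => this.1 (by simp [hc])
    have hx : x ∉ q.support := by
      have := hp.of_cons.support_nodup
      simp only [Walk.support_cons, List.nodup_cons] at this
      exact this.1
    have hqmem : ∀ f ∈ altMatch q, ∀ z ∈ f, z ∈ q.support := fun f hf z hz =>
      mem_support_of_mem_edges' q (altMatch_subset_edges q f hf) hz
    intro z hz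
    simp only [Walk.support_cons, List.mem_cons] at hz
    rcases hz with rfl | rfl | hz
    · refine ⟨s(z, x), ⟨Or.inl rfl, by simp⟩, ?_⟩
      rintro f ⟨hf, hzf⟩
      rcases hf with rfl | hf
      · rfl
      · exact absurd (hqmem f hf z hzf) hu
    · refine ⟨s(u, z), ⟨Or.inl rfl, by simp⟩, ?_⟩
      rintro f ⟨hf, hzf⟩
      rcases hf with rfl | hf
      · rfl
      · exact absurd (hqmem f hf z hzf) hx
    · obtain ⟨f, ⟨hf1, hf2⟩, huniq⟩ := ih hoddq hq z hz
      refine ⟨f, ⟨Or.inr hf1, hf2⟩, ?_⟩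
      rintro g ⟨hg, hzg⟩
      rcases hg with rfl | hg
      · rcases Sym2.mem_iff.1 hzg with rfl | rfl
        · exact absurd hz hu
        · exact absurd hz hx
      · exact huniq g ⟨hg, hzg⟩

lemma skipMatch_subset_edges {u v : V} (p : G.Walk u v) :
    ∀ f ∈ skipMatch p, f ∈ p.edges := by
  cases p with
  | nil => simp [skipMatch]
  | cons h q =>
    intro f hf
    simp only [Walk.edges_cons, List.mem_cons]
    exact Or.inr (altMatch_subset_edges q f hf)

lemma skipMatch_vertices {u v : V} (p : G.Walk u v) (hp : p.IsPath) :
    ∀ f ∈ skipMatch p, ∀ y ∈ f, y ∈ p.support ∧ y ≠ u := by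
  cases p with
  | nil => simp [skipMatch]
  | cons h q =>
    intro f hf y hy
    have hyq : y ∈ q.support := mem_support_of_mem_edges' q (altMatch_subset_edges q f hf) hy
    have hu : u ∉ q.support := by
      have := hp.support_nodup
      simp only [Walk.support_cons, List.nodup_cons] at this
      exact this.1
    exact ⟨by simp [Walk.support_cons, hyq], fun hc => hu (hc ▸ hyq)⟩

lemma skipMatch_cover {u v : V} (p : G.Walk u v) (heven : Even p.length)
    (hp : p.IsPath) : ∀ z ∈ p.support, z ≠ u → ∃! f, f ∈ skipMatch p ∧ z ∈ f := by
  cases p with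
  | nil => intro z hz hne; simp at hz; exact absurd hz hne
  | cons h q =>
    intro z hz hne
    have hzq : z ∈ q.support := by
      simp only [Walk.support_cons, List.mem_cons] at hz
      exact hz.resolve_left hne
    have hodd : Odd q.length := by
      simp only [Walk.length_cons, Nat.even_add_one] at heven
      exact Nat.not_even_iff_odd.1 heven
    exact altMatch_cover q hodd hp.of_cons z hzq

lemma assemble {c u1 w1 u2 w2 : V} (C : G.Walk c c)
    (Q1 : G.Walk u1 w1) (Q2 : G.Walk u2 w2)
    (hQ1 : Q1.IsPath) (hQ2 : Q2.IsPath)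
    (he1 : Even Q1.length) (he2 : Even Q2.length)
    (hdisj : ∀ x ∈ Q1.support, x ∉ Q2.support)
    {e : Sym2 V} (he : e ∈ C.edges) (hee : e = s(u1, u2))
    (hsupC : ∀ x ∈ C.support, x ∈ Q1.support ∨ x ∈ Q2.support)
    (hCedge : ∀ f ∈ C.edges, ∃ a b, f = s(a, b) ∧ (a = u1 ∨ a = w1) ∧ (b = u2 ∨ b = w2)) :
    ∃ Me : Set (Sym2 V),
      (∀ f ∈ Me, f ∈ C.edges ∨ f ∈ Q1.edges ∨ f ∈ Q2.edges) ∧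
      (∀ v, v ∈ C.support ∨ v ∈ Q1.support ∨ v ∈ Q2.support → ∃! f, f ∈ Me ∧ v ∈ f) ∧
      {g | g ∈ Me ∧ g ∈ C.edges} = {e} := by
  classical
  have hdisj' : ∀ x ∈ Q2.support, x ∉ Q1.support := fun x hx hc => hdisj x hc hx
  have hu1 : u1 ∈ Q1.support := Q1.start_mem_support
  have hu2 : u2 ∈ Q2.support := Q2.start_mem_support
  set D : Set (Sym2 V) := skipMatch Q1 ∪ skipMatch Q2 with hD
  have hDC : ∀ f ∈ D, f ∉ C.edges := by
    rintro f (hf | hf) hfc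
    · obtain ⟨a, b, rfl, ha, hb⟩ := hCedge f hfc
      have hbv : b ∈ Q1.support :=
        (skipMatch_vertices Q1 hQ1 _ hf b (by simp)).1
      have hbv2 : b ∈ Q2.support := by
        rcases hb with rfl | rfl
        · exact hu2
        · exact Q2.end_mem_support
      exact hdisj b hbv hbv2
    · obtain ⟨a, b, rfl, ha, hb⟩ := hCedge f hfc
      have hav : a ∈ Q2.support :=
        (skipMatch_vertices Q2 hQ2 _ hf a (by simp)).1
      have hav1 : a ∈ Q1.support := by
        rcases ha with rfl | rfl
        · exact hu1
        · exact Q1.end_mem_support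
      exact hdisj a hav1 hav
  refine ⟨insert e D, ?_, ?_, ?_⟩
  · rintro f (rfl | hf | hf)
    · exact Or.inl he
    · exact Or.inr (Or.inl (skipMatch_subset_edges Q1 f hf))
    · exact Or.inr (Or.inr (skipMatch_subset_edges Q2 f hf))
  · have main : ∀ v, v ∈ Q1.support ∨ v ∈ Q2.support → ∃! f, f ∈ insert e D ∧ v ∈ f := by
      intro v hv
      by_cases hvu1 : v = u1
      · subst hvu1
        refine ⟨e, ⟨Set.mem_insert _ _, by simp [hee]⟩, ?_⟩
        rintro g ⟨hg, hvg⟩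
        rcases hg with rfl | hg | hg
        · rfl
        · exact absurd rfl (skipMatch_vertices Q1 hQ1 g hg v hvg).2
        · exact absurd hu1 (hdisj' v (skipMatch_vertices Q2 hQ2 g hg v hvg).1)
      · by_cases hvu2 : v = u2
        · subst hvu2
          refine ⟨e, ⟨Set.mem_insert _ _, by simp [hee]⟩, ?_⟩
          rintro g ⟨hg, hvg⟩
          rcases hg with rfl | hg | hg
          · rfl
          · exact absurd hu2 (hdisj v (skipMatch_vertices Q1 hQ1 g hg v hvg).1)
          · exact absurd rfl (skipMatch_vertices Q2 hQ2 g hg v hvg).2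
        · have hnote : v ∉ e := by
            rw [hee]; simp only [Sym2.mem_iff]; tauto
          rcases hv with hv | hv
          · obtain ⟨f, ⟨hf1, hf2⟩, huniq⟩ := skipMatch_cover Q1 he1 hQ1 v hv hvu1
            refine ⟨f, ⟨Set.mem_insert_of_mem _ (Or.inl hf1), hf2⟩, ?_⟩
            rintro g ⟨hg, hvg⟩
            rcases hg with rfl | hg | hg
            · exact absurd hvg hnote
            · exact huniq g ⟨hg, hvg⟩
            · exact absurd hv (hdisj' v (skipMatch_vertices Q2 hQ2 g hg v hvg).1)
          · obtain ⟨f, ⟨hf1, hf2⟩, huniq⟩ := skipMatch_cover Q2 he2 hQ2 v hv hvu2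
            refine ⟨f, ⟨Set.mem_insert_of_mem _ (Or.inr hf1), hf2⟩, ?_⟩
            rintro g ⟨hg, hvg⟩
            rcases hg with rfl | hg | hg
            · exact absurd hvg hnote
            · exact absurd hv (hdisj v (skipMatch_vertices Q1 hQ1 g hg v hvg).1)
            · exact huniq g ⟨hg, hvg⟩
    intro v hv
    rcases hv with hv | hv
    · exact main v (hsupC v hv)
    · exact main v hv
  · ext g
    simp only [Set.mem_setOf_eq, Set.mem_singleton_iff]
    constructor
    · rintro ⟨rfl | hg, hgc⟩
      · rfl
      · exact absurd hgc (hDC g hg)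
    · rintro rfl
      exact ⟨Set.mem_insert _ _, he⟩

lemma bip_not_mem {V1 V2 : Set V} (h : IsBipartitionOf G V1 V2) (v : V) :
    v ∈ V1 ↔ v ∉ V2 := by
  constructor
  · exact fun hv hc => Set.disjoint_left.mp h.1 hv hc
  · intro hv
    have : v ∈ V1 ∪ V2 := h.2.1 ▸ Set.mem_univ v
    exact this.resolve_right hv

lemma bip_adj_not {V1 V2 : Set V} (hV : IsBipartitionOf G V1 V2) {a b : V}
    (h : G.Adj a b) : a ∈ V1 ↔ b ∉ V1 := by
  have h1 := hV.2.2 h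
  have h2 := bip_not_mem hV b
  tauto

lemma walk_parity {V1 V2 : Set V} (hV : IsBipartitionOf G V1 V2) {x y : V}
    (p : G.Walk x y) : Even p.length ↔ (x ∈ V1 ↔ y ∈ V1) := by
  induction p with
  | nil => simp
  | @cons x x' y h q ih =>
    have h1 := hV.2.2 h
    have h2 := bip_not_mem hV x'
    simp only [Walk.length_cons, Nat.even_add_one, ih]
    tauto

set_option maxHeartbeats 1000000 in
lemma mid {V1 V2 : Set V} (hV : IsBipartitionOf G V1 V2)
    {c s1 t1 s2 t2 : V} (C : G.Walk c c) (P1 : G.Walk s1 t1) (P2 : G.Walk s2 t2)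
    (hp1 : P1.IsPath) (hp2 : P2.IsPath)
    (hdisj : ∀ x ∈ P1.support, x ∉ P2.support)
    (hCsup : ∀ x ∈ C.support, x = s1 ∨ x = s2 ∨ x = t1 ∨ x = t2)
    (hCedges : ∀ f ∈ C.edges, f = s(s1, s2) ∨ f = s(s2, t1) ∨ f = s(t1, t2) ∨ f = s(t2, s1))
    (hsame1 : s1 ∈ V1 ↔ t1 ∈ V1) (hsame2 : s2 ∈ V1 ↔ t2 ∈ V1)
    {e : Sym2 V} (he : e ∈ C.edges) :
    ∃ Me : Set (Sym2 V),
      (∀ f ∈ Me,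
        f ∈ ({g | g ∈ C.edges} ∪ {g | g ∈ P1.edges} ∪ {g | g ∈ P2.edges} : Set (Sym2 V))) ∧
      (∀ v ∈ ({z | z ∈ C.support} ∪ {z | z ∈ P1.support} ∪ {z | z ∈ P2.support} : Set V),
        ∃! f, f ∈ Me ∧ v ∈ f) ∧
      {g | g ∈ Me ∧ g ∈ C.edges} = {e} := by
  have hev1 : Even P1.length := (walk_parity hV P1).2 hsame1
  have hev2 : Even P2.length := (walk_parity hV P2).2 hsame2
  have hsupP : ∀ x ∈ C.support, x ∈ P1.support ∨ x ∈ P2.support := by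
    intro x hx
    rcases hCsup x hx with rfl | rfl | rfl | rfl
    · exact Or.inl P1.start_mem_support
    · exact Or.inr P2.start_mem_support
    · exact Or.inl P1.end_mem_support
    · exact Or.inr P2.end_mem_support
  have hCE : ∀ f ∈ C.edges, ∃ a b, f = s(a, b) ∧ (a = s1 ∨ a = t1) ∧ (b = s2 ∨ b = t2) := by
    intro f hf
    rcases hCedges f hf with rfl | rfl | rfl | rfl
    · exact ⟨s1, s2, rfl, Or.inl rfl, Or.inl rfl⟩
    · exact ⟨t1, s2, Sym2.eq_swap, Or.inr rfl, Or.inl rfl⟩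
    · exact ⟨t1, t2, rfl, Or.inr rfl, Or.inr rfl⟩
    · exact ⟨s1, t2, Sym2.eq_swap, Or.inl rfl, Or.inr rfl⟩
  have hdisj' : ∀ x ∈ P1.reverse.support, x ∉ P2.support := by
    intro x hx; exact hdisj x (by simpa using hx)
  have hdisjR : ∀ x ∈ P1.support, x ∉ P2.reverse.support := by
    intro x hx; simpa using hdisj x hx
  have hdisj'R : ∀ x ∈ P1.reverse.support, x ∉ P2.reverse.support := by
    intro x hx; simpa using hdisj x (by simpa using hx)
  have hsup1R : ∀ x, x ∈ P1.support → x ∈ P1.reverse.support := by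
    intro x hx; simpa using hx
  have hsup2R : ∀ x, x ∈ P2.support → x ∈ P2.reverse.support := by
    intro x hx; simpa using hx
  have hCE21 : ∀ f ∈ C.edges, ∃ a b, f = s(a, b) ∧ (a = t1 ∨ a = s1) ∧ (b = s2 ∨ b = t2) := by
    intro f hf; obtain ⟨a, b, h1, h2, h3⟩ := hCE f hf; exact ⟨a, b, h1, h2.symm, h3⟩
  have hCE12 : ∀ f ∈ C.edges, ∃ a b, f = s(a, b) ∧ (a = s1 ∨ a = t1) ∧ (b = t2 ∨ b = s2) := by
    intro f hf; obtain ⟨a, b, h1, h2, h3⟩ := hCE f hf; exact ⟨a, b, h1, h2, h3.symm⟩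
  have hCE22 : ∀ f ∈ C.edges, ∃ a b, f = s(a, b) ∧ (a = t1 ∨ a = s1) ∧ (b = t2 ∨ b = s2) := by
    intro f hf; obtain ⟨a, b, h1, h2, h3⟩ := hCE f hf; exact ⟨a, b, h1, h2.symm, h3.symm⟩
  rcases hCedges e he with hE | hE | hE | hE
  · obtain ⟨Me, hA, hB, hCeq⟩ := assemble C P1 P2 hp1 hp2 hev1 hev2 hdisj he hE hsupP hCE
    refine ⟨Me, ?_, ?_, hCeq⟩
    · intro f hf; rcases hA f hf with h | h | h <;>
        simp only [Set.mem_union, Set.mem_setOf_eq] <;> tauto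
    · intro v hv
      simp only [Set.mem_union, Set.mem_setOf_eq] at hv
      exact hB v (by tauto)
  · have hE' : e = s(t1, s2) := hE.trans Sym2.eq_swap
    obtain ⟨Me, hA, hB, hCeq⟩ := assemble C P1.reverse P2 hp1.reverse hp2
      (by simpa using hev1) hev2 hdisj' he hE'
      (fun x hx => (hsupP x hx).imp (hsup1R x) id) hCE21
    refine ⟨Me, ?_, ?_, hCeq⟩
    · intro f hf
      simp only [Set.mem_union, Set.mem_setOf_eq]
      rcases hA f hf with h | h | h
      · exact Or.inl (Or.inl h)
      · exact Or.inl (Or.inr (by simpa using h))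
      · exact Or.inr h
    · intro v hv
      simp only [Set.mem_union, Set.mem_setOf_eq] at hv
      refine hB v ?_
      simp only [Walk.support_reverse, List.mem_reverse]
      tauto
  · obtain ⟨Me, hA, hB, hCeq⟩ := assemble C P1.reverse P2.reverse hp1.reverse hp2.reverse
      (by simpa using hev1) (by simpa using hev2) hdisj'R he hE
      (fun x hx => (hsupP x hx).imp (hsup1R x) (hsup2R x)) hCE22
    refine ⟨Me, ?_, ?_, hCeq⟩
    · intro f hf
      simp only [Set.mem_union, Set.mem_setOf_eq]
      rcases hA f hf with h | h | h
      · exact Or.inl (Or.inl h)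
      · exact Or.inl (Or.inr (by simpa using h))
      · exact Or.inr (by simpa using h)
    · intro v hv
      simp only [Set.mem_union, Set.mem_setOf_eq] at hv
      refine hB v ?_
      simp only [Walk.support_reverse, List.mem_reverse]
      tauto
  · have hE' : e = s(s1, t2) := hE.trans Sym2.eq_swap
    obtain ⟨Me, hA, hB, hCeq⟩ := assemble C P1 P2.reverse hp1 hp2.reverse
      hev1 (by simpa using hev2) hdisjR he hE'
      (fun x hx => (hsupP x hx).imp id (hsup2R x)) hCE12
    refine ⟨Me, ?_, ?_, hCeq⟩
    · intro f hf
      simp only [Set.mem_union, Set.mem_setOf_eq]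
      rcases hA f hf with h | h | h
      · exact Or.inl (Or.inl h)
      · exact Or.inl (Or.inr (by simpa using h))
      · exact Or.inr (by simpa using h)
    · intro v hv
      simp only [Set.mem_union, Set.mem_setOf_eq] at hv
      refine hB v ?_
      simp only [Walk.support_reverse, List.mem_reverse]
      tauto

end Statement5Aux

set_option maxHeartbeats 4000000 in
/-- if `P1, P2` form a conformal cross over the 4-cycle `C`, then for every
edge `e` of `C` the graph `C + P1 + P2` has a perfect matching `Me` with
`Me ∩ E(C) = {e}`. -/
theorem statement_5 {V : Type*} [Fintype V] [DecidableEq V] (B : SimpleGraph V)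
    (hbip : IsBipartite B) (hbrace : IsBrace B)
    {c s1 t1 s2 t2 : V} (C : B.Walk c c) (hC : C.IsCycle) (hlen : C.length = 4)
    (P1 : B.Walk s1 t1) (P2 : B.Walk s2 t2) (M : Set (Sym2 V))
    (hcross : IsMatchingCrossOn B Set.univ C M P1 P2)
    (hconf : CrossConformalOn B Set.univ C P1 P2) :
    ∀ e ∈ C.edges, ∃ Me : Set (Sym2 V),
      (∀ f ∈ Me,
        f ∈ ({g | g ∈ C.edges} ∪ {g | g ∈ P1.edges} ∪ {g | g ∈ P2.edges} : Set (Sym2 V))) ∧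
      (∀ v ∈ ({z | z ∈ C.support} ∪ {z | z ∈ P1.support} ∪ {z | z ∈ P2.support} : Set V),
        ∃! f, f ∈ Me ∧ v ∈ f) ∧
      {g | g ∈ Me ∧ g ∈ C.edges} = {e} := by
  intro e he
  obtain ⟨V1, V2, hV⟩ := hbip
  obtain ⟨-, hnd, hcyc, hp1, hp2, -, -, hdisj, -, -⟩ := hcross
  clear hconf hbrace M hnd
  cases C with
  | nil => simp at hlen
  | cons h1 p =>
    rename_i x1
    cases p with
    | nil => simp at hlen
    | cons h2 p =>
      rename_i x2
      cases p with
      | nil => simp at hlen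
      | cons h3 p =>
        rename_i x3
        cases p with
        | nil => simp at hlen
        | cons h4 p =>
          rename_i x4
          cases p with
          | cons h5 p => simp [SimpleGraph.Walk.length_cons] at hlen
          | nil =>
            have k1 := bip_adj_not hV h1
            have k2 := bip_adj_not hV h2
            have k3 := bip_adj_not hV h3
            have hcx2 : c ∈ V1 ↔ x2 ∈ V1 :=
              ⟨fun h => not_not.1 (mt k2.mpr (k1.mp h)),
               fun h => k1.mpr (mt k2.mp (not_not.2 h))⟩
            have h13 : x1 ∈ V1 ↔ x3 ∈ V1 :=
              ⟨fun h => not_not.1 (mt k3.mpr (k2.mp h)),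
               fun h => k2.mpr (mt k3.mp (not_not.2 h))⟩
            clear k1 k2 k3
            obtain ⟨n, hsub | hsub⟩ := hcyc
            · have hlist := hsub.eq_of_length (by simp)
              simp only [Walk.support_cons, Walk.support_nil, List.tail_cons] at hlist
              have e0 : [x1, x2, x3, c].length = 4 := rfl
              rw [← List.rotate_mod, e0] at hlist
              have hn4 : n % 4 = 0 ∨ n % 4 = 1 ∨ n % 4 = 2 ∨ n % 4 = 3 := by omega
              rcases hn4 with h | h | h | h <;> rw [h] at hlist <;>
                  rw [List.rotate_eq_drop_append_take (by norm_num)] at hlist <;>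
                  simp only [List.drop, List.take, List.cons_append, List.nil_append,
                    List.cons.injEq, and_true] at hlist <;>
                  obtain ⟨rfl, rfl, rfl, rfl⟩ := hlist <;>
                refine mid hV _ P1 P2 hp1 hp2 hdisj ?_ ?_ (by first | exact hcx2 | exact hcx2.symm | exact h13 | exact h13.symm)
                  (by first | exact hcx2 | exact hcx2.symm | exact h13 | exact h13.symm) he <;>
                first
                | (intro x hx
                   simp only [Walk.support_cons, Walk.support_nil, List.mem_cons,
                     List.not_mem_nil, or_false] at hx
                   tauto)
                | (intro f hf
                   simp only [Walk.edges_cons, Walk.edges_nil, List.mem_cons,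
                     List.not_mem_nil, or_false] at hf
                   rcases hf with rfl | rfl | rfl | rfl <;> simp only [Sym2.eq_iff] <;> tauto)
            · have hlist := hsub.eq_of_length (by simp)
              simp only [Walk.support_cons, Walk.support_nil, List.tail_cons,
                List.reverse_cons, List.reverse_nil, List.nil_append, List.cons_append,
                List.append_nil] at hlist
              have e0 : [c, x3, x2, x1].length = 4 := rfl
              rw [← List.rotate_mod, e0] at hlist
              have hn4 : n % 4 = 0 ∨ n % 4 = 1 ∨ n % 4 = 2 ∨ n % 4 = 3 := by omega
              rcases hn4 with h | h | h | h <;> rw [h] at hlist <;>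
                  rw [List.rotate_eq_drop_append_take (by norm_num)] at hlist <;>
                  simp only [List.drop, List.take, List.cons_append, List.nil_append,
                    List.cons.injEq, and_true] at hlist <;>
                  obtain ⟨rfl, rfl, rfl, rfl⟩ := hlist <;>
                refine mid hV _ P1 P2 hp1 hp2 hdisj ?_ ?_ (by first | exact hcx2 | exact hcx2.symm | exact h13 | exact h13.symm)
                  (by first | exact hcx2 | exact hcx2.symm | exact h13 | exact h13.symm) he <;>
                first
                | (intro x hx
                   simp only [Walk.support_cons, Walk.support_nil, List.mem_cons,
                     List.not_mem_nil, or_false] at hx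
                   tauto)
                | (intro f hf
                   simp only [Walk.edges_cons, Walk.edges_nil, List.mem_cons,
                     List.not_mem_nil, or_false] at hf
                   rcases hf with rfl | rfl | rfl | rfl <;> simp only [Sym2.eq_iff] <;> tauto)

end Paper
end

section
/- Let B be a bipartite matching covered graph, M a perfect matching of B, and e = ab ∈ M with a ∈ V1 and b ∈ V2. Let X ⊆ V1 ∖ {a} and Y ⊆ V2 ∖ {b} be such that every internally M-conformal path in B with one endpoint in X and the other endpoint in Y contains the edge e. Then there exists a set Z ⊆ V(B) such that ∂(Z) is a tight cut in B with X ⊆ Z, Y ⊆ V(B) ∖ Z, and e ∈ ∂(Z). -/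
namespace Paper

open SimpleGraph

variable {V : Type*} {W : Type*}

section Statement7Aux

variable {V : Type*}

/-- Directed step relation for the proof of statement 7: non-matching edges are
directed from `V1` to `V2`, matching edges other than `ab` from `V2` to `V1`. -/
def S7Rel (B : SimpleGraph V) (V1 V2 : Set V) (M : Set (Sym2 V)) (a b : V) (u v : V) : Prop :=
  B.Adj u v ∧ ((u ∈ V1 ∧ s(u, v) ∉ M) ∨ (u ∈ V2 ∧ s(u, v) ∈ M ∧ s(u, v) ≠ s(a, b)))

/-- A walk all of whose darts follow `S7Rel`. -/
def S7Walk (B : SimpleGraph V) (V1 V2 : Set V) (M : Set (Sym2 V)) (a b : V)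
    {u v : V} (W : B.Walk u v) : Prop :=
  ∀ d ∈ W.darts, S7Rel B V1 V2 M a b d.toProd.1 d.toProd.2

/-- The candidate tight-cut shore. -/
def S7Z (B : SimpleGraph V) (V1 V2 : Set V) (M : Set (Sym2 V)) (a b : V) (X : Set V) :
    Set V :=
  {v | (∃ x ∈ X, s(x, v) ∈ M) ∨ ∃ x ∈ X, ∃ W : B.Walk x v, S7Walk B V1 V2 M a b W}

lemma s7_exists_dart_fst {G : SimpleGraph V} {u v : V} (W : G.Walk u v) (c : V)
    (hc : c ∈ W.support) (hcv : c ≠ v) : ∃ d ∈ W.darts, d.toProd.1 = c := by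
  induction W with
  | nil => simp only [SimpleGraph.Walk.support_nil, List.mem_singleton] at hc; exact absurd hc hcv
  | cons h p ih =>
    rename_i x y z
    rw [SimpleGraph.Walk.support_cons, List.mem_cons] at hc
    rcases hc with rfl | hc
    · exact ⟨⟨(c, y), h⟩, by simp [SimpleGraph.Walk.darts_cons], rfl⟩
    · obtain ⟨d, hd, hd1⟩ := ih hc hcv
      exact ⟨d, by simp [SimpleGraph.Walk.darts_cons, hd], hd1⟩

lemma s7_exists_dart_snd {G : SimpleGraph V} {u v : V} (W : G.Walk u v) (c : V)
    (hc : c ∈ W.support) (hcu : c ≠ u) : ∃ d ∈ W.darts, d.toProd.2 = c := by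
  induction W with
  | nil => simp only [SimpleGraph.Walk.support_nil, List.mem_singleton] at hc; exact absurd hc hcu
  | cons h p ih =>
    rename_i x y z
    rw [SimpleGraph.Walk.support_cons, List.mem_cons] at hc
    rcases hc with rfl | hc
    · exact absurd rfl hcu
    · by_cases hcy : c = y
      · exact ⟨⟨(x, y), h⟩, by simp [SimpleGraph.Walk.darts_cons], hcy.symm⟩
      · obtain ⟨d, hd, hd2⟩ := ih hc hcy
        exact ⟨d, by simp [SimpleGraph.Walk.darts_cons, hd], hd2⟩

lemma s7_dart_snd_ne_start {G : SimpleGraph V} {u v : V} {W : G.Walk u v}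
    (hW : W.IsPath) {d : G.Dart} (hd : d ∈ W.darts) : d.toProd.2 ≠ u := by
  induction W with
  | nil => simp at hd
  | cons h p ih =>
    rw [SimpleGraph.Walk.darts_cons, List.mem_cons] at hd
    rcases hd with rfl | hd
    · exact h.ne'
    · intro hdu
      have : d.toProd.2 ∈ p.support := p.dart_snd_mem_support_of_mem_darts hd
      rw [hdu] at this
      exact ((SimpleGraph.Walk.cons_isPath_iff _ _).mp hW).2 this

lemma s7_dart_fst_ne_end {G : SimpleGraph V} {u v : V} {W : G.Walk u v}
    (hW : W.IsPath) {d : G.Dart} (hd : d ∈ W.darts) : d.toProd.1 ≠ v := by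
  induction W with
  | nil => simp at hd
  | cons h p ih =>
    rw [SimpleGraph.Walk.darts_cons, List.mem_cons] at hd
    rcases hd with rfl | hd
    · intro huv
      exact ((SimpleGraph.Walk.cons_isPath_iff _ _).mp hW).2 (huv ▸ p.end_mem_support)
    · exact ih ((SimpleGraph.Walk.cons_isPath_iff _ _).mp hW).1 hd

lemma s7_dart_edge {G : SimpleGraph V} (d : G.Dart) :
    s(d.toProd.1, d.toProd.2) = d.edge := by
  rcases d with ⟨⟨p, q⟩, h⟩; rfl

end Statement7Aux

/-- existence of a tight cut separating `X` from `Y` through the matching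
edge `e = ab` meeting all internally `M`-conformal `X`–`Y`-paths. -/
theorem statement_7 {V : Type*} [Fintype V] [DecidableEq V] (B : SimpleGraph V)
    (V1 V2 : Set V) (hbip : IsBipartitionOf B V1 V2) (hmc : MatchingCovered B)
    (M : Set (Sym2 V)) (hM : IsPM B M) (a b : V) (ha : a ∈ V1) (hb : b ∈ V2)
    (he : s(a, b) ∈ M) (X Y : Set V) (hX : X ⊆ V1 \ {a}) (hY : Y ⊆ V2 \ {b})
    (hpaths : ∀ x ∈ X, ∀ y ∈ Y, ∀ P : B.Walk x y, P.IsPath →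
      InternallyMConformal B M P → s(a, b) ∈ P.edges) :
    ∃ Z : Set V, IsTightCut B Z ∧ X ⊆ Z ∧ Y ⊆ Set.univ \ Z ∧ s(a, b) ∈ edgeCut B Z := by
  obtain ⟨hdisj, huniv, hadj⟩ := hbip
  have hclass : ∀ v : V, v ∈ V1 ∨ v ∈ V2 := by
    intro v
    have h : v ∈ V1 ∪ V2 := by rw [huniv]; exact Set.mem_univ v
    exact h
  have hnot : ∀ v : V, v ∈ V1 → v ∈ V2 → False := fun v h1 h2 =>
    Set.disjoint_left.mp hdisj h1 h2
  have hadj12 : ∀ {u v : V}, B.Adj u v → u ∈ V1 → v ∈ V2 := fun h hu => (hadj h).mp hu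
  have hadj21 : ∀ {u v : V}, B.Adj u v → u ∈ V2 → v ∈ V1 := by
    intro u v h hu
    rcases hclass v with hv | hv
    · exact hv
    · exact absurd hu (hnot u ((hadj h).mpr hv))
  have hMa : ∀ {u v : V}, s(u, v) ∈ M → B.Adj u v := fun h =>
    B.mem_edgeSet.mp (hM.1 _ h)
  have hMuniq : ∀ u v w : V, s(u, v) ∈ M → s(u, w) ∈ M → v = w := by
    intro u v w h1 h2
    obtain ⟨f, -, hf⟩ := hM.2.2 u (Set.mem_univ u)
    have e1 := hf s(u, v) ⟨h1, Sym2.mem_mk_left u v⟩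
    have e2 := hf s(u, w) ⟨h2, Sym2.mem_mk_left u w⟩
    exact Sym2.congr_right.mp (e1.trans e2.symm)
  have hab : B.Adj a b := hMa he
  rcases X.eq_empty_or_nonempty with hXe | ⟨x0, hx0⟩
  · -- degenerate case: X empty, use Z = {a}
    refine ⟨{a}, ?_, by simp [hXe], ?_, ?_⟩
    · intro N hN
      obtain ⟨f, ⟨hfN, hfa⟩, hfu⟩ := hN.2.2 a (Set.mem_univ a)
      have hcut : edgeCut B {a} ∩ N = {f} := by
        ext g
        constructor
        · rintro ⟨⟨hgE, x, y, rfl, hx, hy⟩, hgN⟩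
          rcases hx with rfl
          exact hfu _ ⟨hgN, Sym2.mem_mk_left _ _⟩
        · intro hg
          rw [Set.mem_singleton_iff] at hg
          rw [hg]
          obtain ⟨c, hc⟩ : ∃ c, s(a, c) = f := ⟨Sym2.Mem.other hfa, Sym2.other_spec hfa⟩
          have hadjac : B.Adj a c := B.mem_edgeSet.mp (hN.1 _ (by rw [hc]; exact hfN))
          refine ⟨⟨hN.1 _ hfN, a, c, hc.symm, rfl, ?_⟩, hfN⟩
          simpa using hadjac.ne'
      rw [hcut, Set.ncard_singleton]
    · intro y hy
      refine ⟨Set.mem_univ y, ?_⟩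
      have hy2 := (hY hy).1
      simp only [Set.mem_singleton_iff]
      intro h; exact hnot a ha (h ▸ hy2)
    · exact ⟨hM.1 _ he, a, b, rfl, rfl, by simpa using hab.ne'⟩
  · -- main case
    set R := S7Rel B V1 V2 M a b with hR
    set Z := S7Z B V1 V2 M a b X with hZ
    have hXZ : X ⊆ Z := by
      intro x hx
      exact Or.inr ⟨x, hx, SimpleGraph.Walk.nil, by intro d hd; simp at hd⟩
    have hstep : ∀ u v : V, u ∈ Z → R u v → v ∈ Z := by
      intro u v hu hrel
      rcases hu with ⟨x, hxX, hxM⟩ | ⟨x, hxX, W, hW⟩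
      · rcases hrel.2 with ⟨hu1, -⟩ | ⟨-, huvM, -⟩
        · exact absurd hu1 (fun h => hnot u h (hadj12 (hMa hxM) (hX hxX).1))
        · have : v = x := hMuniq u v x huvM (by rw [Sym2.eq_swap]; exact hxM)
          exact hXZ (this ▸ hxX)
      · refine Or.inr ⟨x, hxX, W.concat hrel.1, ?_⟩
        intro d hd
        simp only [SimpleGraph.Walk.darts_concat, List.concat_eq_append, List.mem_append,
          List.mem_singleton] at hd
        rcases hd with hd | hd
        · exact hW d hd
        · subst hd
          exact hrel
    have hlast : ∀ (s t : V) (W : B.Walk s t), S7Walk B V1 V2 M a b W → s ∈ Z →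
        t = s ∨ ∃ w ∈ Z, R w t := by
      intro s t W
      induction W with
      | nil => exact fun _ _ => Or.inl rfl
      | cons h p ih =>
        rename_i x y z
        intro hW hs
        have hrel : R x y := by
          have := hW ⟨(x, y), h⟩ (by simp [SimpleGraph.Walk.darts_cons])
          exact this
        have hy : y ∈ Z := hstep x y hs hrel
        have hW' : S7Walk B V1 V2 M a b p := fun d hd =>
          hW d (by simp [SimpleGraph.Walk.darts_cons, hd])
        rcases ih hW' hy with rfl | hres
        · exact Or.inr ⟨x, hs, hrel⟩
        · exact Or.inr hres
    have hZmem : ∀ u ∈ Z, u ∈ Z := fun u hu => hu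
    have hZV1 : ∀ u ∈ Z, u ∈ V1 → u ≠ a ∧ ∃ w ∈ Z, s(u, w) ∈ M := by
      intro u hu hu1
      rcases hu with ⟨x, hxX, hxM⟩ | ⟨x, hxX, W, hW⟩
      · exact absurd hu1 (fun h => hnot u h (hadj12 (hMa hxM) (hX hxX).1))
      · rcases hlast x u W hW (hXZ hxX) with rfl | ⟨w, hwZ, hrel⟩
        · refine ⟨fun h => (hX hxX).2 (by simpa using h), ?_⟩
          obtain ⟨f, ⟨hfM, hfu⟩, -⟩ := hM.2.2 u (Set.mem_univ u)
          obtain ⟨c, hc⟩ : ∃ c, s(u, c) = f := ⟨Sym2.Mem.other hfu, Sym2.other_spec hfu⟩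
          have hcM : s(u, c) ∈ M := by rw [hc]; exact hfM
          exact ⟨c, Or.inl ⟨u, hxX, hcM⟩, hcM⟩
        · rcases hrel.2 with ⟨hw1, -⟩ | ⟨hw2, hwuM, hne⟩
          · exact absurd hu1 (fun h => hnot u h (hadj12 hrel.1 hw1))
          · constructor
            · intro hua
              rw [hua] at hwuM
              have hwb : w = b := hMuniq a w b (by rw [Sym2.eq_swap]; exact hwuM) he
              apply hne
              rw [hua, hwb]
              exact Sym2.eq_swap
            · exact ⟨w, hwZ, by rw [Sym2.eq_swap]; exact hwuM⟩
    have haZ : a ∉ Z := fun h => (hZV1 a h ha).1 rfl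
    have hcrossV2 : ∀ u v : V, B.Adj u v → u ∈ Z → v ∉ Z → u ∈ V2 := by
      intro u v hadjuv huZ hvZ
      rcases hclass u with hu1 | hu2
      · exfalso
        by_cases hm : s(u, v) ∈ M
        · obtain ⟨-, w, hwZ, hwM⟩ := hZV1 u huZ hu1
          exact hvZ ((hMuniq u v w hm hwM) ▸ hwZ)
        · exact hvZ (hstep u v huZ ⟨hadjuv, Or.inl ⟨hu1, hm⟩⟩)
      · exact hu2
    have hcrossM : ∀ u v : V, s(u, v) ∈ M → u ∈ Z → v ∉ Z → s(u, v) = s(a, b) := by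
      intro u v h huZ hvZ
      by_contra hne
      exact hvZ (hstep u v huZ ⟨hMa h, Or.inr ⟨hcrossV2 u v (hMa h) huZ hvZ, h, hne⟩⟩)
    -- counting lemma
    have hcount : ∀ N : Set (Sym2 V), IsPM B N →
        (Z ∩ V2).ncard = (Z ∩ V1).ncard + (edgeCut B Z ∩ N).ncard := by
      intro N hN
      have hpN : ∀ v : V, ∃ w, s(v, w) ∈ N ∧ ∀ w', s(v, w') ∈ N → w' = w := by
        intro v
        obtain ⟨f, ⟨hfN, hvf⟩, hfu⟩ := hN.2.2 v (Set.mem_univ v)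
        refine ⟨Sym2.Mem.other hvf, by rw [Sym2.other_spec hvf]; exact hfN, ?_⟩
        intro w' hw'
        have h1 := hfu _ ⟨hw', Sym2.mem_mk_left v w'⟩
        have h2 : s(v, Sym2.Mem.other hvf) = f := Sym2.other_spec hvf
        exact Sym2.congr_right.mp (h1.trans h2.symm)
      choose pN hpN1 hpN2 using hpN
      have hpNadj : ∀ v : V, B.Adj v (pN v) := fun v =>
        B.mem_edgeSet.mp (hN.1 _ (hpN1 v))
      have hpNsym : ∀ v : V, pN (pN v) = v := fun v =>
        (hpN2 (pN v) v (by rw [Sym2.eq_swap]; exact hpN1 v)).symm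
      have key1 : ∀ u : V, u ∈ Z → u ∈ V1 → pN u ∈ Z ∧ pN u ∈ V2 := by
        intro u huZ hu1
        refine ⟨?_, hadj12 (hpNadj u) hu1⟩
        by_contra hc
        exact hnot u hu1 (hcrossV2 u (pN u) (hpNadj u) huZ hc)
      set A : Set V := (Z ∩ V2) ∩ {v | pN v ∈ Z} with hA
      set Bs : Set V := (Z ∩ V2) ∩ {v | pN v ∉ Z} with hBs
      have h1 : pN '' A = Z ∩ V1 := by
        ext u
        constructor
        · rintro ⟨v, ⟨⟨hvZ, hv2⟩, hvp⟩, rfl⟩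
          exact ⟨hvp, hadj21 (hpNadj v) hv2⟩
        · rintro ⟨huZ, hu1⟩
          obtain ⟨hpZ, hp2⟩ := key1 u huZ hu1
          exact ⟨pN u, ⟨⟨hpZ, hp2⟩, by rw [Set.mem_setOf_eq, hpNsym]; exact huZ⟩, hpNsym u⟩
      have h1inj : Set.InjOn pN A := by
        intro v1 _ v2 _ hv
        have := congrArg pN hv
        rwa [hpNsym, hpNsym] at this
      have h2 : (fun v => s(v, pN v)) '' Bs = edgeCut B Z ∩ N := by
        ext g
        constructor
        · rintro ⟨v, ⟨⟨hvZ, hv2⟩, hvp⟩, rfl⟩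
          exact ⟨⟨hN.1 _ (hpN1 v), v, pN v, rfl, hvZ, hvp⟩, hpN1 v⟩
        · rintro ⟨⟨hgE, x, y, rfl, hxZ, hyZ⟩, hgN⟩
          have hx2 : x ∈ V2 := hcrossV2 x y (B.mem_edgeSet.mp hgE) hxZ hyZ
          have hxy : pN x = y := (hpN2 x y hgN).symm
          exact ⟨x, ⟨⟨hxZ, hx2⟩, by rw [Set.mem_setOf_eq, hxy]; exact hyZ⟩, by
            show s(x, pN x) = s(x, y); rw [hxy]⟩
      have h2inj : Set.InjOn (fun v => s(v, pN v)) Bs := by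
        intro v1 hv1 v2 hv2 hv
        simp only [Sym2.eq_iff] at hv
        rcases hv with ⟨h, -⟩ | ⟨h, h'⟩
        · exact h
        · exfalso; exact hv2.2 (h ▸ hv1.1.1)
      have hsplit : Z ∩ V2 = A ∪ Bs := by
        ext v
        simp only [hA, hBs, Set.mem_inter_iff, Set.mem_union, Set.mem_setOf_eq]
        tauto
      have hdisjAB : Disjoint A Bs := by
        rw [Set.disjoint_left]
        rintro v ⟨-, hv1⟩ ⟨-, hv2⟩
        exact hv2 hv1
      calc (Z ∩ V2).ncard = A.ncard + Bs.ncard := by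
            rw [hsplit, Set.ncard_union_eq hdisjAB (Set.toFinite _) (Set.toFinite _)]
        _ = (Z ∩ V1).ncard + (edgeCut B Z ∩ N).ncard := by
            rw [← h1, ← h2, Set.ncard_image_of_injOn h1inj, Set.ncard_image_of_injOn h2inj]
    have hMcut : ∀ g ∈ edgeCut B Z ∩ M, g = s(a, b) := by
      rintro g ⟨⟨hgE, x, y, rfl, hx, hy⟩, hgM⟩
      exact hcrossM x y hgM hx hy
    have hbZ : b ∈ Z := by
      by_contra hbZ
      have hcutM : edgeCut B Z ∩ M = ∅ := by
        rw [Set.eq_empty_iff_forall_notMem]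
        rintro g hg
        obtain ⟨⟨hgE, x, y, rfl, hx, hy⟩, hgM⟩ := hg
        have := hcrossM x y hgM hx hy
        rw [Sym2.eq_iff] at this
        rcases this with ⟨rfl, rfl⟩ | ⟨rfl, rfl⟩
        · exact haZ hx
        · exact hbZ hx
      have h0 : (Z ∩ V2).ncard = (Z ∩ V1).ncard := by
        have := hcount M hM
        rw [hcutM] at this
        simpa using this
      have hcutE : edgeCut B Z = ∅ := by
        rw [Set.eq_empty_iff_forall_notMem]
        intro g hg
        obtain ⟨N, hNpm, hgN⟩ := hmc.2.2 g hg.1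
        have hc := hcount N hNpm
        rw [h0] at hc
        have : (edgeCut B Z ∩ N).ncard = 0 := by omega
        rw [Set.ncard_eq_zero (Set.toFinite _)] at this
        exact absurd ⟨hg, hgN⟩ (this ▸ Set.notMem_empty g)
      have hZclosed : ∀ u v : V, u ∈ Z → B.Adj u v → v ∈ Z := by
        intro u v hu hadjuv
        by_contra hv
        have : s(u, v) ∈ edgeCut B Z := ⟨B.mem_edgeSet.mpr hadjuv, u, v, rfl, hu, hv⟩
        rw [hcutE] at this
        exact this
      have hwalkall : ∀ (s t : V) (W : B.Walk s t), s ∈ Z → t ∈ Z := by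
        intro s t W
        induction W with
        | nil => exact fun h => h
        | cons h p ih => exact fun hs => ih (hZclosed _ _ hs h)
      obtain ⟨W⟩ := hmc.2.1.2 x0 (Set.mem_univ x0) a (Set.mem_univ a)
      exact haZ (hwalkall x0 a W (hXZ hx0))
    have hcutMeq : edgeCut B Z ∩ M = {s(a, b)} := by
      apply Set.eq_singleton_iff_unique_mem.mpr
      refine ⟨⟨⟨hM.1 _ he, b, a, Sym2.eq_swap, hbZ, haZ⟩, he⟩, hMcut⟩
    have htight : IsTightCut B Z := by
      intro N hN
      have hc1 := hcount M hM
      rw [hcutMeq, Set.ncard_singleton] at hc1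
      have hc2 := hcount N hN
      omega
    -- internal conformality of S7 paths
    have hconf : ∀ (x y : V), x ∈ V1 → y ∈ V2 → ∀ P : B.Walk x y, P.IsPath →
        S7Walk B V1 V2 M a b P → InternallyMConformal B M P := by
      intro x y hx1 hy2 P hP hPD
      intro c hc
      obtain ⟨hcs, hcx, hcy⟩ := hc
      have hex : ∃ f, f ∈ M ∧ f ∈ P.edges ∧
          (∀ z ∈ f, z ∈ {z | z ∈ P.support ∧ z ≠ x ∧ z ≠ y}) ∧ c ∈ f := by
        rcases hclass c with hc1 | hc2
        · obtain ⟨d, hd, hd2⟩ := s7_exists_dart_snd P c hcs hcx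
          have hrel := hPD d hd
          rcases hrel.2 with ⟨hp1, -⟩ | ⟨hp2, hpm, -⟩
          · exfalso
            exact hnot c hc1 (hd2 ▸ hadj12 hrel.1 hp1)
          · refine ⟨s(d.toProd.1, d.toProd.2), hpm, ?_, ?_, hd2 ▸ Sym2.mem_mk_right _ _⟩
            · rw [s7_dart_edge]
              exact List.mem_map_of_mem hd
            · intro z hz
              rw [Sym2.mem_iff] at hz
              rcases hz with rfl | rfl
              · refine ⟨P.dart_fst_mem_support_of_mem_darts hd, ?_, s7_dart_fst_ne_end hP hd⟩
                intro h
                exact hnot x (h ▸ hx1) (h ▸ hp2)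
              · exact ⟨hd2 ▸ hcs, hd2 ▸ hcx, hd2 ▸ hcy⟩
        · obtain ⟨d, hd, hd1⟩ := s7_exists_dart_fst P c hcs hcy
          have hrel := hPD d hd
          rcases hrel.2 with ⟨hp1, -⟩ | ⟨-, hpm, -⟩
          · exact absurd (hd1 ▸ hp1) (fun h => hnot c h hc2)
          · refine ⟨s(d.toProd.1, d.toProd.2), hpm, ?_, ?_, hd1 ▸ Sym2.mem_mk_left _ _⟩
            · rw [s7_dart_edge]
              exact List.mem_map_of_mem hd
            · intro z hz
              rw [Sym2.mem_iff] at hz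
              rcases hz with rfl | rfl
              · exact ⟨hd1 ▸ hcs, hd1 ▸ hcx, hd1 ▸ hcy⟩
              · have hzV1 : d.toProd.2 ∈ V1 := hadj21 hrel.1 (hd1 ▸ hc2)
                refine ⟨P.dart_snd_mem_support_of_mem_darts hd, s7_dart_snd_ne_start hP hd, ?_⟩
                intro h
                exact hnot _ hzV1 (h ▸ hy2)
      obtain ⟨f, hfM, hfE, hfint, hcf⟩ := hex
      refine ⟨f, ⟨hfM, hfE, hfint, hcf⟩, ?_⟩
      rintro g ⟨hgM, -, -, hcg⟩
      obtain ⟨f0, -, hf0⟩ := hM.2.2 c (Set.mem_univ c)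
      exact (hf0 g ⟨hgM, hcg⟩).trans (hf0 f ⟨hfM, hcf⟩).symm
    have hYZ : Y ⊆ Set.univ \ Z := by
      intro y hy
      refine ⟨Set.mem_univ y, ?_⟩
      intro hyZ
      rcases hyZ with ⟨x, hxX, hxM⟩ | ⟨x, hxX, W, hW⟩
      · -- single matching edge from x to y
        have hadjxy : B.Adj x y := hMa hxM
        set P : B.Walk x y := SimpleGraph.Walk.cons hadjxy SimpleGraph.Walk.nil with hPdef
        have hPpath : P.IsPath := by
          rw [hPdef]
          simp [SimpleGraph.Walk.isPath_def, hadjxy.ne]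
        have hPconf : InternallyMConformal B M P := by
          intro c hc
          obtain ⟨hcs, hcx, hcy⟩ := hc
          exfalso
          rw [hPdef] at hcs
          simp [SimpleGraph.Walk.support_cons, SimpleGraph.Walk.support_nil] at hcs
          rcases hcs with rfl | rfl
          · exact hcx rfl
          · exact hcy rfl
        have := hpaths x hxX y hy P hPpath hPconf
        rw [hPdef] at this
        simp only [SimpleGraph.Walk.edges_cons, SimpleGraph.Walk.edges_nil,
          List.mem_singleton] at this
        rw [Sym2.eq_iff] at this
        rcases this with ⟨rfl, rfl⟩ | ⟨rfl, rfl⟩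
        · exact (hX hxX).2 rfl
        · exact hnot b (hX hxX).1 hb
      · set P := W.bypass with hPdef
        have hPpath : P.IsPath := W.bypass_isPath
        have hPD : S7Walk B V1 V2 M a b P := fun d hd => hW d (W.darts_bypass_subset hd)
        have hx1 : x ∈ V1 := (hX hxX).1
        have hy2 : y ∈ V2 := (hY hy).1
        have hPconf := hconf x y hx1 hy2 P hPpath hPD
        have hmem := hpaths x hxX y hy P hPpath hPconf
        have : ∃ d ∈ P.darts, d.edge = s(a, b) := by
          have : P.edges = P.darts.map SimpleGraph.Dart.edge := rfl
          rw [this] at hmem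
          obtain ⟨d, hd, hde⟩ := List.mem_map.mp hmem
          exact ⟨d, hd, hde⟩
        obtain ⟨d, hd, hde⟩ := this
        have hrel := hPD d hd
        rw [← s7_dart_edge] at hde
        rcases hrel.2 with ⟨-, hnm⟩ | ⟨-, -, hne⟩
        · exact hnm (hde ▸ he)
        · exact hne hde
    exact ⟨Z, htight, hXZ, hYZ, ⟨hM.1 _ he, b, a, Sym2.eq_swap, hbZ, haZ⟩⟩

end Paper
end

section
/- Let B be a brace, M a perfect matching of B, H an M-conformal matching covered subgraph of B, and X ⊆ V(H) such that ∂_H(X) (the set of edges of H with exactly one endpoint in X) is a non-trivial tight cut in H. Then there exists an internally M-conformal path P in B such that no internal vertex of P lies in V(H), one endpoint of P lies in the minority of X, and the other endpoint of P lies in the minority of V(H) ∖ X. -/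
namespace Paper

open SimpleGraph

variable {V : Type*} {W : Type*}

section Statement8Proof

/-! ### Auxiliary machinery for `statement_8` -/

private lemma bip_symm' {B : SimpleGraph V} {V1 V2 : Set V}
    (h : IsBipartitionOf B V1 V2) : IsBipartitionOf B V2 V1 :=
  ⟨h.1.symm, by rw [Set.union_comm]; exact h.2.1, fun x y hxy => (h.2.2 hxy.symm).symm⟩

private lemma bip_mem {B : SimpleGraph V} {V1 V2 : Set V} (h : IsBipartitionOf B V1 V2)
    (x : V) : x ∈ V1 ∨ x ∈ V2 := by
  have hx : x ∈ V1 ∪ V2 := h.2.1 ▸ Set.mem_univ x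
  exact hx

private lemma bip_nb {B : SimpleGraph V} {V1 V2 : Set V} (h : IsBipartitionOf B V1 V2)
    {x : V} (h1 : x ∈ V1) (h2 : x ∈ V2) : False :=
  Set.disjoint_left.mp h.1 h1 h2

private lemma bip_adj12 {B : SimpleGraph V} {V1 V2 : Set V} (h : IsBipartitionOf B V1 V2)
    {x y : V} (hxy : B.Adj x y) (hx : x ∈ V1) : y ∈ V2 := (h.2.2 hxy).mp hx

private lemma bip_adj21 {B : SimpleGraph V} {V1 V2 : Set V} (h : IsBipartitionOf B V1 V2)
    {x y : V} (hxy : B.Adj x y) (hx : x ∈ V2) : y ∈ V1 := (h.2.2 hxy.symm).mpr hx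

private lemma pm_partner {B : SimpleGraph V} {M : Set (Sym2 V)} (hM : IsPM B M) (v : V) :
    ∃ u, s(v, u) ∈ M ∧ ∀ u', s(v, u') ∈ M → u' = u := by
  obtain ⟨e, ⟨heM, hve⟩, huniq⟩ := hM.2.2 v (Set.mem_univ v)
  refine ⟨Sym2.Mem.other hve, by rw [Sym2.other_spec hve]; exact heM, ?_⟩
  intro u' hu'
  have h1 : s(v, u') = e := huniq _ ⟨hu', Sym2.mem_mk_left v u'⟩
  rw [← Sym2.other_spec hve] at h1
  exact Sym2.congr_right.mp h1

private lemma pmOn_partner {G : SimpleGraph V} {S : Set V} {M : Set (Sym2 V)}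
    (hM : IsPMOn G S M) {v : V} (hv : v ∈ S) :
    ∃ u, s(v, u) ∈ M ∧ u ∈ S ∧ ∀ u', s(v, u') ∈ M → u' = u := by
  obtain ⟨e, ⟨heM, hve⟩, huniq⟩ := hM.2.2 v hv
  refine ⟨Sym2.Mem.other hve, by rw [Sym2.other_spec hve]; exact heM, ?_, ?_⟩
  · exact hM.2.1 e heM _ (Sym2.other_mem hve)
  · intro u' hu'
    have h1 : s(v, u') = e := huniq _ ⟨hu', Sym2.mem_mk_left v u'⟩
    rw [← Sym2.other_spec hve] at h1
    exact Sym2.congr_right.mp h1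

private lemma pm_adj {B : SimpleGraph V} {M : Set (Sym2 V)} (hM : IsPM B M) {x y : V}
    (h : s(x, y) ∈ M) : B.Adj x y :=
  B.mem_edgeSet.mp (hM.1 _ h)

private lemma pm_unique_edge {B : SimpleGraph V} {M : Set (Sym2 V)} (hM : IsPM B M) {x : V}
    {e e' : Sym2 V} (he : e ∈ M) (hxe : x ∈ e) (he' : e' ∈ M) (hxe' : x ∈ e') : e' = e := by
  obtain ⟨e0, _, huniq⟩ := hM.2.2 x (Set.mem_univ x)
  rw [huniq _ ⟨he', hxe'⟩, huniq _ ⟨he, hxe⟩]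

private lemma walk_closed {B : SimpleGraph V} {S : Set V}
    (hcl : ∀ x ∈ S, ∀ y : V, B.Adj x y → y ∈ S) {a b : V} (W : B.Walk a b) :
    a ∈ S → b ∈ S := by
  induction W with
  | nil => exact id
  | cons h W ih => exact fun ha => ih (hcl _ ha _ h)

private lemma walk_cross {B : SimpleGraph V} {Z : Set V} {a b : V} (W : B.Walk a b) :
    a ∈ Z → b ∉ Z → ∃ x y, B.Adj x y ∧ x ∈ Z ∧ y ∉ Z := by
  induction W with
  | nil => exact fun ha hb => absurd ha hb
  | @cons u v w h W ih =>
    intro ha hb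
    by_cases hv : v ∈ Z
    · exact ih hv hb
    · exact ⟨u, v, h, ha, hv⟩

private lemma sym2_eq_of_mem {e : Sym2 V} {a b : V} (ha : a ∈ e) (hb : b ∈ e) (hab : a ≠ b) :
    e = s(a, b) := by
  induction e using Sym2.ind with
  | _ x y =>
    rcases Sym2.mem_iff.mp ha with rfl | rfl
    · rcases Sym2.mem_iff.mp hb with rfl | rfl
      · exact absurd rfl hab
      · rfl
    · rcases Sym2.mem_iff.mp hb with rfl | rfl
      · exact Sym2.eq_swap
      · exact absurd rfl hab

private lemma edgeCut_compl (B : SimpleGraph V) (Z : Set V) : edgeCut B Zᶜ = edgeCut B Z := by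
  ext e
  constructor
  · rintro ⟨heE, x, y, rfl, hx, hy⟩
    exact ⟨heE, y, x, Sym2.eq_swap, by simpa using hy, hx⟩
  · rintro ⟨heE, x, y, rfl, hx, hy⟩
    exact ⟨heE, y, x, Sym2.eq_swap, hy, fun hc => hc hx⟩

/-- Alternating walks used to define reachability through the exterior of `SH`. -/
private inductive Alt (B : SimpleGraph V) (M : Set (Sym2 V)) (SH X V2 : Set V) :
    ∀ {w p : V}, B.Walk w p → Prop
  | base {w p : V} (hadj : B.Adj w p) (hp : p ∈ X) (hp2 : p ∈ V2) (hw : w ∉ SH) :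
      Alt B M SH X V2 (SimpleGraph.Walk.cons hadj SimpleGraph.Walk.nil)
  | step {w2 wb w p : V} {W : B.Walk w p} (h2 : B.Adj w2 wb) (hb : B.Adj wb w)
      (hMe : s(w, wb) ∈ M) (hwb : wb ∉ SH) (hw2 : w2 ∉ SH)
      (ha : Alt B M SH X V2 W) :
      Alt B M SH X V2 (SimpleGraph.Walk.cons h2 (SimpleGraph.Walk.cons hb W))

private lemma Alt.last_mem {B : SimpleGraph V} {M : Set (Sym2 V)} {SH X V2 : Set V}
    {w p : V} {W : B.Walk w p} (h : Alt B M SH X V2 W) : p ∈ X ∧ p ∈ V2 := by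
  induction h with
  | base _ hp hp2 _ => exact ⟨hp, hp2⟩
  | step _ _ _ _ _ _ ih => exact ih

private lemma Alt.front_V1 {B : SimpleGraph V} {M : Set (Sym2 V)} {SH X V1 V2 : Set V}
    {w p : V} {W : B.Walk w p} (hbip : IsBipartitionOf B V1 V2)
    (h : Alt B M SH X V2 W) : w ∈ V1 := by
  induction h with
  | @base w p hadj hp hp2 hw => exact (hbip.2.2 hadj).mpr hp2
  | @step w2 wb w p W h2 hb hMe hwb hw2 ha ih =>
    exact (hbip.2.2 h2).mpr (bip_adj12 hbip hb.symm ih)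

private lemma Alt.support_not_SH {B : SimpleGraph V} {M : Set (Sym2 V)} {SH X V2 : Set V}
    {w p : V} {W : B.Walk w p} (h : Alt B M SH X V2 W) :
    ∀ v ∈ W.support, v ≠ p → v ∉ SH := by
  induction h with
  | @base w p hadj hp hp2 hw =>
    intro v hv hvp
    rw [Walk.support_cons, Walk.support_nil] at hv
    rcases List.mem_cons.mp hv with rfl | hv
    · exact hw
    · rw [List.mem_singleton] at hv; exact absurd hv hvp
  | @step w2 wb w p W h2 hb hMe hwb hw2 ha ih =>
    intro v hv hvp
    rw [Walk.support_cons, Walk.support_cons] at hv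
    rcases List.mem_cons.mp hv with rfl | hv
    · exact hw2
    rcases List.mem_cons.mp hv with rfl | hv
    · exact hwb
    · exact ih v hv hvp

private lemma Alt.partner_in {B : SimpleGraph V} {M : Set (Sym2 V)} {SH X V1 V2 : Set V}
    {w p : V} {W : B.Walk w p} (hbip : IsBipartitionOf B V1 V2) (hXsub : X ⊆ SH)
    (h : Alt B M SH X V2 W) :
    W.IsPath → ∀ v ∈ W.support, v ∈ V2 → v ≠ p →
      ∃ u, u ∈ W.support ∧ s(v, u) ∈ M ∧ u ≠ w := by
  induction h with
  | @base w p hadj hp hp2 hw =>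
    intro _ v hv hv2 hvp
    rw [Walk.support_cons, Walk.support_nil] at hv
    rcases List.mem_cons.mp hv with rfl | hv
    · exact absurd hv2 (fun h2 => bip_nb hbip ((hbip.2.2 hadj).mpr hp2) h2)
    · rw [List.mem_singleton] at hv; exact absurd hv hvp
  | @step w2 wb w p W h2 hb hMe hwb hw2 ha ih =>
    intro hpath v hv hv2 hvp
    have hpath1 : (Walk.cons hb W).IsPath := hpath.of_cons
    have hpathW : W.IsPath := hpath1.of_cons
    have hw2sup : w2 ∉ (Walk.cons hb W).support := ((Walk.cons_isPath_iff _ _).mp hpath).2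
    have hwV1 : w ∈ V1 := ha.front_V1 hbip
    have hwbV2 : wb ∈ V2 := bip_adj12 hbip hb.symm hwV1
    rw [Walk.support_cons, Walk.support_cons] at hv
    rcases List.mem_cons.mp hv with rfl | hv
    · exact absurd hv2 (fun hx => bip_nb hbip ((hbip.2.2 h2).mpr hwbV2) hx)
    rcases List.mem_cons.mp hv with rfl | hv
    · refine ⟨w, ?_, ?_, ?_⟩
      · rw [Walk.support_cons, Walk.support_cons]
        exact List.mem_cons_of_mem _ (List.mem_cons_of_mem _ W.start_mem_support)
      · rw [Sym2.eq_swap]; exact hMe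
      · intro hww2; apply hw2sup; rw [← hww2, Walk.support_cons]
        exact List.mem_cons_of_mem _ W.start_mem_support
    · obtain ⟨u, hu, huM, _⟩ := ih hpathW v hv hv2 hvp
      refine ⟨u, ?_, huM, ?_⟩
      · rw [Walk.support_cons, Walk.support_cons]
        exact List.mem_cons_of_mem _ (List.mem_cons_of_mem _ hu)
      · intro huw2; apply hw2sup; rw [← huw2, Walk.support_cons]
        exact List.mem_cons_of_mem _ hu

private lemma Alt.pair_edge {B : SimpleGraph V} {M : Set (Sym2 V)} {SH X V1 V2 : Set V}
    {w p : V} {W : B.Walk w p} (hbip : IsBipartitionOf B V1 V2) (hXsub : X ⊆ SH)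
    (h : Alt B M SH X V2 W) :
    W.IsPath → ∀ v ∈ W.support, v ≠ p → v ≠ w →
      ∃ u, u ∈ W.support ∧ u ≠ p ∧ u ≠ w ∧ s(v, u) ∈ M ∧ s(v, u) ∈ W.edges := by
  induction h with
  | @base w p hadj hp hp2 hw =>
    intro _ v hv hvp hvw
    rw [Walk.support_cons, Walk.support_nil] at hv
    rcases List.mem_cons.mp hv with rfl | hv
    · exact absurd rfl hvw
    · rw [List.mem_singleton] at hv; exact absurd hv hvp
  | @step w2 wb w p W h2 hb hMe hwb hw2 ha ih =>
    intro hpath v hv hvp hvw2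
    have hpath1 : (Walk.cons hb W).IsPath := hpath.of_cons
    have hpathW : W.IsPath := hpath1.of_cons
    have hw2sup : w2 ∉ (Walk.cons hb W).support := ((Walk.cons_isPath_iff _ _).mp hpath).2
    have hwV1 : w ∈ V1 := ha.front_V1 hbip
    have hpV2 : p ∈ V2 := ha.last_mem.2
    have hpSH : p ∈ SH := hXsub ha.last_mem.1
    have hwp : w ≠ p := fun hh => bip_nb hbip hwV1 (by rw [hh]; exact hpV2)
    have hww2 : w ≠ w2 := by
      intro hh
      apply hw2sup
      rw [← hh, Walk.support_cons]
      exact List.mem_cons_of_mem _ W.start_mem_support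
    have hwbw2 : wb ≠ w2 := fun hh => hw2sup (by rw [← hh]; exact (Walk.cons hb W).start_mem_support)
    have hwbp : wb ≠ p := fun hh => hwb (by rw [hh]; exact hpSH)
    rw [Walk.support_cons, Walk.support_cons] at hv
    rcases List.mem_cons.mp hv with rfl | hv
    · exact absurd rfl hvw2
    rcases List.mem_cons.mp hv with rfl | hv
    · -- v = wb, partner is w
      refine ⟨w, ?_, hwp, hww2, by rw [Sym2.eq_swap]; exact hMe, ?_⟩
      · rw [Walk.support_cons, Walk.support_cons]
        exact List.mem_cons_of_mem _ (List.mem_cons_of_mem _ W.start_mem_support)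
      · rw [Walk.edges_cons, Walk.edges_cons]
        exact List.mem_cons_of_mem _ List.mem_cons_self
    · by_cases hvw : v = w
      · subst hvw
        refine ⟨wb, ?_, hwbp, hwbw2, hMe, ?_⟩
        · rw [Walk.support_cons, Walk.support_cons]
          exact List.mem_cons_of_mem _ List.mem_cons_self
        · rw [Walk.edges_cons, Walk.edges_cons]
          rw [show s(v, wb) = s(wb, v) from Sym2.eq_swap]
          exact List.mem_cons_of_mem _ List.mem_cons_self
      · obtain ⟨u, hu, hup, huw, huM, huE⟩ := ih hpathW v hv hvp hvw
        refine ⟨u, ?_, hup, ?_, huM, ?_⟩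
        · rw [Walk.support_cons, Walk.support_cons]
          exact List.mem_cons_of_mem _ (List.mem_cons_of_mem _ hu)
        · intro huw2; apply hw2sup; rw [← huw2, Walk.support_cons]
          exact List.mem_cons_of_mem _ hu
        · rw [Walk.edges_cons, Walk.edges_cons]
          exact List.mem_cons_of_mem _ (List.mem_cons_of_mem _ huE)

private lemma Alt.restart {B : SimpleGraph V} {M : Set (Sym2 V)} {SH X V1 V2 : Set V}
    {w p : V} {W : B.Walk w p} (hbip : IsBipartitionOf B V1 V2)
    (h : Alt B M SH X V2 W) :
    W.IsPath → ∀ v ∈ W.support, v ∈ V1 →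
      ∃ W' : B.Walk v p, Alt B M SH X V2 W' ∧ W'.IsPath := by
  induction h with
  | @base w p hadj hp hp2 hw =>
    intro hpath v hv hv1
    rw [Walk.support_cons, Walk.support_nil] at hv
    rcases List.mem_cons.mp hv with rfl | hv
    · exact ⟨Walk.cons hadj Walk.nil, Alt.base hadj hp hp2 hw, hpath⟩
    · rw [List.mem_singleton] at hv; subst hv
      exact absurd hv1 (fun hh => bip_nb hbip hh hp2)
  | @step w2 wb w p W h2 hb hMe hwb hw2 ha ih =>
    intro hpath v hv hv1
    have hpath1 : (Walk.cons hb W).IsPath := hpath.of_cons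
    have hpathW : W.IsPath := hpath1.of_cons
    have hwV1 : w ∈ V1 := ha.front_V1 hbip
    have hwbV2 : wb ∈ V2 := bip_adj12 hbip hb.symm hwV1
    rw [Walk.support_cons, Walk.support_cons] at hv
    rcases List.mem_cons.mp hv with rfl | hv
    · exact ⟨Walk.cons h2 (Walk.cons hb W), Alt.step h2 hb hMe hwb hw2 ha, hpath⟩
    rcases List.mem_cons.mp hv with rfl | hv
    · exact absurd hv1 (fun hh => bip_nb hbip hh hwbV2)
    · exact ih hpathW v hv hv1

private def Rch (B : SimpleGraph V) (M : Set (Sym2 V)) (SH X V2 : Set V) (w : V) : Prop :=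
  ∃ (p : V) (W : B.Walk w p), Alt B M SH X V2 W ∧ W.IsPath

private lemma rch_not_SH {B : SimpleGraph V} {M : Set (Sym2 V)} {SH X V2 : Set V} {w : V}
    (h : Rch B M SH X V2 w) : w ∉ SH := by
  obtain ⟨p, W, ha, hpath⟩ := h
  induction ha with
  | base _ _ _ hw => exact hw
  | step _ _ _ _ hw2 _ _ => exact hw2

private lemma rch_V1 {B : SimpleGraph V} {M : Set (Sym2 V)} {SH X V1 V2 : Set V} {w : V}
    (hbip : IsBipartitionOf B V1 V2) (h : Rch B M SH X V2 w) : w ∈ V1 := by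
  obtain ⟨p, W, ha, _⟩ := h
  exact ha.front_V1 hbip

private lemma rch_base {B : SimpleGraph V} {M : Set (Sym2 V)} {SH X V2 : Set V} {u w : V}
    (hu : u ∈ X) (hu2 : u ∈ V2) (hXsub : X ⊆ SH) (h : B.Adj u w) (hw : w ∉ SH) :
    Rch B M SH X V2 w := by
  refine ⟨u, Walk.cons h.symm Walk.nil, Alt.base h.symm hu hu2 hw, ?_⟩
  rw [Walk.cons_isPath_iff]
  refine ⟨Walk.IsPath.nil, ?_⟩
  rw [Walk.support_nil, List.mem_singleton]
  exact fun hh => hw (by rw [hh]; exact hXsub hu)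

private lemma partner_not_in {B : SimpleGraph V} {M : Set (Sym2 V)} {SH X V1 V2 : Set V}
    {w p wb : V} {W : B.Walk w p} (hbip : IsBipartitionOf B V1 V2) (hM : IsPM B M)
    (hXsub : X ⊆ SH) (ha : Alt B M SH X V2 W) (hpath : W.IsPath)
    (hMw : s(w, wb) ∈ M) (hwbSH : wb ∉ SH) : wb ∉ W.support := by
  intro hmem
  have hwV1 : w ∈ V1 := ha.front_V1 hbip
  have hwbV2 : wb ∈ V2 := bip_adj12 hbip (pm_adj hM hMw) hwV1
  have hwbp : wb ≠ p := fun hh => hwbSH (by rw [hh]; exact hXsub ha.last_mem.1)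
  obtain ⟨u, _, huM, hune⟩ := ha.partner_in hbip hXsub hpath wb hmem hwbV2 hwbp
  obtain ⟨u0, _, huniq⟩ := pm_partner hM wb
  exact hune ((huniq _ huM).trans (huniq _ (by rw [Sym2.eq_swap]; exact hMw)).symm)

private lemma rch_step {B : SimpleGraph V} {M : Set (Sym2 V)} {SH X V1 V2 : Set V}
    (hbip : IsBipartitionOf B V1 V2) (hM : IsPM B M) (hXsub : X ⊆ SH) {w wb w2 : V}
    (hr : Rch B M SH X V2 w) (hMw : s(w, wb) ∈ M) (h2 : B.Adj wb w2)
    (hwbSH : wb ∉ SH) (hw2 : w2 ∉ SH) : Rch B M SH X V2 w2 := by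
  obtain ⟨p, W, ha, hpath⟩ := hr
  have hwV1 : w ∈ V1 := ha.front_V1 hbip
  have hadj : B.Adj w wb := pm_adj hM hMw
  have hwbV2 : wb ∈ V2 := bip_adj12 hbip hadj hwV1
  have hw2V1 : w2 ∈ V1 := bip_adj21 hbip h2 hwbV2
  have hwbsup : wb ∉ W.support := partner_not_in hbip hM hXsub ha hpath hMw hwbSH
  by_cases hmem : w2 ∈ W.support
  · obtain ⟨W', ha', hp'⟩ := ha.restart hbip hpath w2 hmem hw2V1
    exact ⟨p, W', ha', hp'⟩
  · refine ⟨p, Walk.cons h2.symm (Walk.cons hadj.symm W),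
      Alt.step h2.symm hadj.symm hMw hwbSH hw2 ha, ?_⟩
    rw [Walk.cons_isPath_iff, Walk.cons_isPath_iff]
    refine ⟨⟨hpath, hwbsup⟩, ?_⟩
    rw [Walk.support_cons]
    intro hmm
    rcases List.mem_cons.mp hmm with rfl | hmm
    · exact bip_nb hbip hw2V1 hwbV2
    · exact hmem hmm

private lemma rch_path {B : SimpleGraph V} {M : Set (Sym2 V)} {SH X V1 V2 : Set V}
    (hbip : IsBipartitionOf B V1 V2) (hM : IsPM B M) (hXsub : X ⊆ SH)
    {w wb q : V} (hr : Rch B M SH X V2 w) (hMw : s(w, wb) ∈ M)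
    (hq : B.Adj wb q) (hqSH : q ∈ SH) (hqX : q ∉ X) (hwbSH : wb ∉ SH) :
    ∃ (p : V) (P : B.Walk p q), P.IsPath ∧ InternallyMConformal B M P ∧
      (∀ z ∈ P.support, z ≠ p → z ≠ q → z ∉ SH) ∧ p ∈ X ∧ p ∈ V2 := by
  obtain ⟨p, W, ha, hpath⟩ := hr
  have hpX : p ∈ X := ha.last_mem.1
  have hpV2 : p ∈ V2 := ha.last_mem.2
  have hpSH : p ∈ SH := hXsub hpX
  have hwV1 : w ∈ V1 := ha.front_V1 hbip
  have hadj : B.Adj w wb := pm_adj hM hMw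
  have hwbsup : wb ∉ W.support := partner_not_in hbip hM hXsub ha hpath hMw hwbSH
  have hqp : q ≠ p := fun h => hqX (by rw [h]; exact hpX)
  have hqsupW : q ∉ W.support := fun hmem => (ha.support_not_SH q hmem hqp) hqSH
  have hqwb : q ≠ wb := fun h => hwbSH (by rw [← h]; exact hqSH)
  have hqsup1 : q ∉ (Walk.cons hadj.symm W).support := by
    rw [Walk.support_cons]
    intro hmm
    rcases List.mem_cons.mp hmm with h | h
    · exact hqwb h
    · exact hqsupW h
  have hpath1 : (Walk.cons hadj.symm W).IsPath := (Walk.cons_isPath_iff _ _).mpr ⟨hpath, hwbsup⟩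
  have hW0path : (Walk.cons hq.symm (Walk.cons hadj.symm W)).IsPath :=
    (Walk.cons_isPath_iff _ _).mpr ⟨hpath1, hqsup1⟩
  have hsupp : ∀ z : V, z ∈ (Walk.cons hq.symm (Walk.cons hadj.symm W)).reverse.support ↔
      (z = q ∨ z = wb ∨ z ∈ W.support) := by
    intro z
    rw [Walk.support_reverse, List.mem_reverse, Walk.support_cons, Walk.support_cons]
    simp [List.mem_cons]
  have hedges : ∀ e : Sym2 V, e ∈ (Walk.cons hq.symm (Walk.cons hadj.symm W)).reverse.edges ↔
      (e = s(q, wb) ∨ e = s(wb, w) ∨ e ∈ W.edges) := by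
    intro e
    rw [Walk.edges_reverse, List.mem_reverse, Walk.edges_cons, Walk.edges_cons]
    simp [List.mem_cons]
  have hwp : w ≠ p := fun h => bip_nb hbip hwV1 (by rw [h]; exact hpV2)
  have hwq : w ≠ q := fun h => hqsupW (by rw [← h]; exact W.start_mem_support)
  have hwbp : wb ≠ p := fun h => hwbSH (by rw [h]; exact hpSH)
  refine ⟨p, (Walk.cons hq.symm (Walk.cons hadj.symm W)).reverse, hW0path.reverse, ?_, ?_, hpX, hpV2⟩
  · intro x hx
    obtain ⟨hxs, hxp, hxq⟩ := hx
    rw [hsupp] at hxs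
    rcases hxs with rfl | hxwb | hxW
    · exact absurd rfl hxq
    · subst hxwb
      -- here wb has been substituted by x
      refine ⟨s(w, x), ⟨hMw, ?_, ?_, Sym2.mem_mk_right w x⟩, ?_⟩
      · rw [hedges]; right; left; exact Sym2.eq_swap
      · intro y hy
        rcases Sym2.mem_iff.mp hy with rfl | rfl
        · exact ⟨(hsupp _).mpr (Or.inr (Or.inr W.start_mem_support)), hwp, hwq⟩
        · exact ⟨(hsupp _).mpr (Or.inr (Or.inl rfl)), hwbp, fun h => hqwb h.symm⟩
      · rintro e' ⟨he'M, _, _, hxe'⟩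
        exact pm_unique_edge hM hMw (Sym2.mem_mk_right w x) he'M hxe'
    · by_cases hxw : x = w
      · refine ⟨s(w, wb), ⟨hMw, ?_, ?_, by rw [hxw]; exact Sym2.mem_mk_left w wb⟩, ?_⟩
        · rw [hedges]; right; left; exact Sym2.eq_swap
        · intro y hy
          rcases Sym2.mem_iff.mp hy with rfl | rfl
          · exact ⟨(hsupp _).mpr (Or.inr (Or.inr W.start_mem_support)), hwp, hwq⟩
          · exact ⟨(hsupp _).mpr (Or.inr (Or.inl rfl)), hwbp, fun h => hqwb h.symm⟩
        · rintro e' ⟨he'M, _, _, hxe'⟩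
          exact pm_unique_edge hM hMw (by rw [hxw]; exact Sym2.mem_mk_left w wb) he'M hxe'
      · obtain ⟨u, hu_sup, hu_p, _, huM, huE⟩ := ha.pair_edge hbip hXsub hpath x hxW hxp hxw
        refine ⟨s(x, u), ⟨huM, ?_, ?_, Sym2.mem_mk_left x u⟩, ?_⟩
        · rw [hedges]; right; right; exact huE
        · intro y hy
          rcases Sym2.mem_iff.mp hy with rfl | rfl
          · exact ⟨(hsupp _).mpr (Or.inr (Or.inr hxW)), hxp, hxq⟩
          · exact ⟨(hsupp _).mpr (Or.inr (Or.inr hu_sup)), hu_p,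
              fun h => hqsupW (by rw [← h]; exact hu_sup)⟩
        · rintro e' ⟨he'M, _, _, hxe'⟩
          exact pm_unique_edge hM huM (Sym2.mem_mk_left x u) he'M hxe'
  · intro z hz hzp hzq
    rcases (hsupp z).mp hz with rfl | rfl | hzW
    · exact absurd rfl hzq
    · exact hwbSH
    · exact ha.support_not_SH z hzW hzp

private lemma star_case {V : Type*} [Fintype V] (B : SimpleGraph V)
    (hext : ∀ F : Set (Sym2 V), F ⊆ B.edgeSet → PairwiseDisjointEdges F → F.ncard ≤ 2 →
      ∃ N, IsPMOn B Set.univ N ∧ F ⊆ N)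
    (hconn : ∀ x y : V, B.Reachable x y)
    (Z : Set V) (hT : ∀ N, IsPM B N → (edgeCut B Z ∩ N).ncard = 1)
    {c : V} (hc : ∀ e ∈ edgeCut B Z, c ∈ e) (hcZ : c ∈ Z)
    (hZ2 : 2 ≤ Z.ncard) (hZc : Zᶜ.Nonempty) : False := by
  by_cases hnb : ∃ y, B.Adj c y ∧ y ∈ Z
  · obtain ⟨y, hcy, hyZ⟩ := hnb
    obtain ⟨N, hN, hFN⟩ := hext {s(c, y)}
      (by rintro e rfl; exact B.mem_edgeSet.mpr hcy)
      (by rintro e rfl f rfl hef; exact absurd rfl hef)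
      (by rw [Set.ncard_singleton]; omega)
    have hsN : s(c, y) ∈ N := hFN rfl
    have hempty : edgeCut B Z ∩ N = ∅ := by
      ext e
      simp only [Set.mem_inter_iff, Set.mem_empty_iff_false, iff_false, not_and]
      intro hecut heN
      have hce : c ∈ e := hc e hecut
      have he_eq : e = s(c, y) := pm_unique_edge hN hsN (Sym2.mem_mk_left c y) heN hce
      obtain ⟨_, x', y', heq, hx', hy'⟩ := hecut
      rw [he_eq] at heq
      rcases Sym2.eq_iff.mp heq with ⟨h1, h2⟩ | ⟨h1, h2⟩
      · exact hy' (h2 ▸ hyZ)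
      · exact hy' (h1 ▸ hcZ)
    have h0 := hT N hN
    rw [hempty, Set.ncard_empty] at h0
    omega
  · push_neg at hnb
    have hScl : ∀ x ∈ Z \ {c}, ∀ y : V, B.Adj x y → y ∈ Z \ {c} := by
      intro x hx y hxy
      have hyZ : y ∈ Z := by
        by_contra hyZ
        have hcut : s(x, y) ∈ edgeCut B Z := ⟨B.mem_edgeSet.mpr hxy, x, y, rfl, hx.1, hyZ⟩
        rcases Sym2.mem_iff.mp (hc _ hcut) with h | h
        · exact hx.2 h.symm
        · exact hyZ (h ▸ hcZ)
      refine ⟨hyZ, ?_⟩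
      intro h
      rw [Set.mem_singleton_iff] at h
      subst h
      exact hnb x hxy.symm hx.1
    have h1lt : 1 < Z.ncard := by omega
    obtain ⟨a, b, haZ, hbZ, hab⟩ := (Set.one_lt_ncard_iff (Set.toFinite _)).mp h1lt
    have hz : ∃ z, z ∈ Z \ {c} := by
      by_cases hac : a = c
      · exact ⟨b, hbZ, fun h => hab (by rw [hac, Set.mem_singleton_iff.mp h])⟩
      · exact ⟨a, haZ, hac⟩
    obtain ⟨z, hzS⟩ := hz
    obtain ⟨b0, hb0⟩ := hZc
    obtain ⟨Wlk⟩ := hconn z b0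
    exact hb0 (walk_closed hScl Wlk hzS).1

private lemma lemA {V : Type*} [Fintype V] (B : SimpleGraph V) (hbrace : IsBrace B)
    (Z : Set V) (hZ2 : 2 ≤ Z.ncard) (hZc2 : 2 ≤ Zᶜ.ncard) :
    ∃ N, IsPM B N ∧ (edgeCut B Z ∩ N).ncard ≠ 1 := by
  by_contra hT
  push_neg at hT
  obtain ⟨hEW, hconn', hext⟩ := hbrace
  have hconn : ∀ x y : V, B.Reachable x y := fun x y => hconn'.2 x trivial y trivial
  by_cases hdisj : ∃ e ∈ edgeCut B Z, ∃ f ∈ edgeCut B Z, e ≠ f ∧ ∀ x : V, x ∈ e → x ∉ f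
  · obtain ⟨e, he, f, hf, hef, hd⟩ := hdisj
    obtain ⟨N, hN, hFN⟩ := hext {e, f}
      (by rintro g (rfl | rfl); exact he.1; exact hf.1)
      (by
        rintro g (rfl | rfl) g' (rfl | rfl) hne x hx
        · exact absurd rfl hne
        · exact hd x hx
        · exact fun hx' => hd x hx' hx
        · exact absurd rfl hne)
      ((Set.ncard_insert_le _ _).trans (by rw [Set.ncard_singleton]))
    have hsub : ({e, f} : Set (Sym2 V)) ⊆ edgeCut B Z ∩ N := by
      rintro g (rfl | rfl)
      · exact ⟨he, hFN (Or.inl rfl)⟩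
      · exact ⟨hf, hFN (Or.inr rfl)⟩
    have h2 : 2 ≤ (edgeCut B Z ∩ N).ncard := by
      rw [← Set.ncard_pair hef]
      exact Set.ncard_le_ncard hsub (Set.toFinite _)
    rw [hT N hN] at h2
    omega
  · push_neg at hdisj
    have hZne : Z.Nonempty := Set.nonempty_of_ncard_ne_zero (by omega)
    have hZcne : Zᶜ.Nonempty := Set.nonempty_of_ncard_ne_zero (by omega)
    have hZne2 := hZne
    have hZcne2 := hZcne
    obtain ⟨z0, hz0⟩ := hZne2
    obtain ⟨w0, hw0⟩ := hZcne2
    obtain ⟨Wlk⟩ := hconn z0 w0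
    obtain ⟨a, b, hab, haZ, hbZ⟩ := walk_cross Wlk hz0 hw0
    have he0 : s(a, b) ∈ edgeCut B Z := ⟨B.mem_edgeSet.mpr hab, a, b, rfl, haZ, hbZ⟩
    by_cases hstar_a : ∀ e ∈ edgeCut B Z, a ∈ e
    · exact star_case B hext hconn Z hT hstar_a haZ hZ2 hZcne
    · push_neg at hstar_a
      obtain ⟨e1, he1, hae1⟩ := hstar_a
      have hbe1 : b ∈ e1 := by
        obtain ⟨x, hx0, hx1⟩ := hdisj _ he0 _ he1 (fun h => hae1 (h ▸ Sym2.mem_mk_left a b))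
        rcases Sym2.mem_iff.mp hx0 with rfl | rfl
        · exact absurd hx1 hae1
        · exact hx1
      have hstar_b : ∀ e2 ∈ edgeCut B Z, b ∈ e2 := by
        intro e2 he2
        by_contra hbe2
        have hae2 : a ∈ e2 := by
          obtain ⟨x, hx0, hx2⟩ := hdisj _ he0 _ he2 (fun h => hbe2 (h ▸ Sym2.mem_mk_right a b))
          rcases Sym2.mem_iff.mp hx0 with rfl | rfl
          · exact hx2
          · exact absurd hx2 hbe2
        have he1c := he1
        obtain ⟨he1E, x1, y1, he1eq, hx1Z, hy1Z⟩ := he1c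
        have hbe1' : b ∈ s(x1, y1) := he1eq ▸ hbe1
        have hby1 : b = y1 := by
          rcases Sym2.mem_iff.mp hbe1' with h | h
          · exact absurd hx1Z (h ▸ hbZ)
          · exact h
        have hne12 : e1 ≠ e2 := fun h => hae1 (h.symm ▸ hae2)
        obtain ⟨x, hxe1, hxe2⟩ := hdisj _ he1 _ he2 hne12
        have hxx1 : x = x1 := by
          have hx' : x ∈ s(x1, y1) := he1eq ▸ hxe1
          rcases Sym2.mem_iff.mp hx' with h | h
          · exact h
          · exact absurd hxe2 (by rw [h, ← hby1]; exact hbe2)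
        have hax1 : a ≠ x1 := fun h => hae1 (by rw [h, he1eq]; exact Sym2.mem_mk_left x1 y1)
        have he2eq : e2 = s(a, x1) := sym2_eq_of_mem hae2 (hxx1 ▸ hxe2) hax1
        have he2c := he2
        obtain ⟨_, x2, y2, he2eq', hx2Z, hy2Z⟩ := he2c
        rw [he2eq] at he2eq'
        rcases Sym2.eq_iff.mp he2eq' with ⟨h1, h2⟩ | ⟨h1, h2⟩
        · exact hy2Z (h2 ▸ hx1Z)
        · exact hy2Z (h1 ▸ haZ)
      have hT' : ∀ N, IsPM B N → (edgeCut B Zᶜ ∩ N).ncard = 1 := by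
        intro N hN; rw [edgeCut_compl]; exact hT N hN
      have hc' : ∀ e ∈ edgeCut B Zᶜ, b ∈ e := by
        intro e he; rw [edgeCut_compl] at he; exact hstar_b e he
      have hZcc : (Zᶜ)ᶜ.Nonempty := by rw [compl_compl]; exact hZne
      exact star_case B hext hconn Zᶜ hT' hc' hbZ hZc2 hZcc

private lemma aux_main {V : Type*} [Fintype V] [DecidableEq V] (B : SimpleGraph V)
    (V1 V2 : Set V) (hbip : IsBipartitionOf B V1 V2) (hbrace : IsBrace B)
    (M : Set (Sym2 V)) (hM : IsPM B M) (SH X : Set V) (hXsub : X ⊆ SH)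
    (hin : ∀ v ∈ SH, ∀ u : V, s(v, u) ∈ M → u ∈ SH)
    (hX2 : 2 ≤ X.ncard) (hY2 : 2 ≤ (SH \ X).ncard)
    (hcard : (X ∩ V1).ncard = (X ∩ V2).ncard + 1) :
    ∃ (p q : V) (P : B.Walk p q), P.IsPath ∧ InternallyMConformal B M P ∧
      (∀ z ∈ P.support, z ≠ p → z ≠ q → z ∉ SH) ∧ p ∈ X ∩ V2 ∧ q ∈ (SH \ X) ∩ V1 := by
  by_contra hgoal
  set Rset : Set V := {w | Rch B M SH X V2 w} with hRdef
  set Pset : Set V := {v | ∃ w, Rch B M SH X V2 w ∧ s(w, v) ∈ M} with hPdef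
  set Z : Set V := X ∪ Rset ∪ Pset with hZdef
  have hRSH : ∀ w ∈ Rset, w ∉ SH := fun w hw => rch_not_SH hw
  have hRV1 : ∀ w ∈ Rset, w ∈ V1 := fun w hw => rch_V1 hbip hw
  have hPSH : ∀ v ∈ Pset, v ∉ SH := by
    rintro v ⟨w, hw, hMv⟩ hvSH
    exact rch_not_SH hw (hin v hvSH w (by rw [Sym2.eq_swap]; exact hMv))
  have hPV2 : ∀ v ∈ Pset, v ∈ V2 := by
    rintro v ⟨w, hw, hMv⟩
    exact bip_adj12 hbip (pm_adj hM hMv) (hRV1 w hw)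
  have hXZ : X ⊆ Z := fun v hv => Or.inl (Or.inl hv)
  have hYZ : ∀ v ∈ SH \ X, v ∉ Z := by
    rintro v hv ((hvX | hvR) | hvP)
    · exact hv.2 hvX
    · exact hRSH v hvR hv.1
    · exact hPSH v hvP hv.1
  have hZ2 : 2 ≤ Z.ncard := le_trans hX2 (Set.ncard_le_ncard hXZ (Set.toFinite _))
  have hZc2 : 2 ≤ Zᶜ.ncard :=
    le_trans hY2 (Set.ncard_le_ncard (fun v hv => hYZ v hv) (Set.toFinite _))
  obtain ⟨N, hN, hNne⟩ := lemA B hbrace Z hZ2 hZc2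
  apply hNne
  -- partner function for N
  choose f hf1 hf2 using fun v => pm_partner hN v
  have hfadj : ∀ v, B.Adj v (f v) := fun v => pm_adj hN (hf1 v)
  have hfinv : ∀ v, f (f v) = v := fun v => (hf2 (f v) v (by rw [Sym2.eq_swap]; exact hf1 v)).symm
  -- no N-edge leaves Z from its V2 side
  have hE2 : ∀ v ∈ Z, v ∈ V2 → f v ∈ Z := by
    intro v hvZ hv2
    by_contra hfv
    have hfv1 : f v ∈ V1 := bip_adj21 hbip (hfadj v) hv2
    rcases hvZ with (hvX | hvR) | hvP
    · by_cases hfSH : f v ∈ SH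
      · by_cases hfX : f v ∈ X
        · exact hfv (hXZ hfX)
        · refine hgoal ⟨v, f v, Walk.cons (hfadj v) Walk.nil, ?_, ?_, ?_, ⟨hvX, hv2⟩,
            ⟨⟨hfSH, hfX⟩, hfv1⟩⟩
          · rw [Walk.cons_isPath_iff]
            refine ⟨Walk.IsPath.nil, ?_⟩
            rw [Walk.support_nil, List.mem_singleton]
            exact (hfadj v).ne
          · intro x hx
            exfalso
            obtain ⟨hxs, hxp, hxq⟩ := hx
            rw [Walk.support_cons, Walk.support_nil] at hxs
            rcases List.mem_cons.mp hxs with rfl | hxs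
            · exact hxp rfl
            · rw [List.mem_singleton] at hxs; exact hxq hxs
          · intro z hz hzp hzq
            rw [Walk.support_cons, Walk.support_nil] at hz
            rcases List.mem_cons.mp hz with rfl | hz
            · exact absurd rfl hzp
            · rw [List.mem_singleton] at hz; exact absurd hz hzq
      · exact hfv (Or.inl (Or.inr (rch_base hvX hv2 hXsub (hfadj v) hfSH)))
    · exact (bip_nb hbip (hRV1 v hvR) hv2).elim
    · obtain ⟨w1, hw1, hw1M⟩ := hvP
      by_cases hfSH : f v ∈ SH
      · by_cases hfX : f v ∈ X
        · exact hfv (hXZ hfX)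
        · obtain ⟨p, P, h1, h2, h3, hp1, hp2⟩ :=
            rch_path hbip hM hXsub hw1 hw1M (hfadj v) hfSH hfX (hPSH v ⟨w1, hw1, hw1M⟩)
          exact hgoal ⟨p, f v, P, h1, h2, h3, ⟨hp1, hp2⟩, ⟨⟨hfSH, hfX⟩, hfv1⟩⟩
      · exact hfv (Or.inl (Or.inr (rch_step hbip hM hXsub hw1 hw1M (hfadj v)
          (hPSH v ⟨w1, hw1, hw1M⟩) hfSH)))
  set E1 : Set V := {v | v ∈ Z ∧ v ∈ V1 ∧ f v ∉ Z} with hE1def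
  have hE1sub : E1 ⊆ Z ∩ V1 := fun v hv => ⟨hv.1, hv.2.1⟩
  have hbij : Set.BijOn f ((Z ∩ V1) \ E1) (Z ∩ V2) := by
    refine ⟨?_, ?_, ?_⟩
    · rintro v ⟨⟨hvZ, hv1⟩, hvE⟩
      have hfZ : f v ∈ Z := by
        by_contra hc
        exact hvE ⟨hvZ, hv1, hc⟩
      exact ⟨hfZ, bip_adj12 hbip (hfadj v) hv1⟩
    · intro a _ b _ hab
      have := congrArg f hab
      rwa [hfinv, hfinv] at this
    · rintro u ⟨huZ, hu2⟩
      have hfuZ : f u ∈ Z := hE2 u huZ hu2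
      have hfu1 : f u ∈ V1 := bip_adj21 hbip (hfadj u) hu2
      refine ⟨f u, ⟨⟨hfuZ, hfu1⟩, ?_⟩, hfinv u⟩
      rintro ⟨_, _, hc⟩
      rw [hfinv] at hc
      exact hc huZ
  -- cardinalities
  have hRP : Rset.ncard = Pset.ncard := by
    choose g hg1 hg2 using fun v => pm_partner hM v
    have himg : Pset = g '' Rset := by
      ext v
      constructor
      · rintro ⟨w, hw, hwM⟩
        exact ⟨w, hw, (hg2 w v hwM).symm⟩
      · rintro ⟨w, hw, rfl⟩
        exact ⟨w, hw, hg1 w⟩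
    rw [himg, Set.ncard_image_of_injOn]
    intro a ha b hb hab
    have h1 : s(g a, a) ∈ M := by rw [Sym2.eq_swap]; exact hg1 a
    have h2 : s(g a, b) ∈ M := by rw [hab, Sym2.eq_swap]; exact hg1 b
    obtain ⟨u0, _, hu⟩ := pm_partner hM (g a)
    exact (hu _ h1).trans (hu _ h2).symm
  have hZV1 : Z ∩ V1 = (X ∩ V1) ∪ Rset := by
    ext v
    constructor
    · rintro ⟨(hvX | hvR) | hvP, hv1⟩
      · exact Or.inl ⟨hvX, hv1⟩
      · exact Or.inr hvR
      · exact (bip_nb hbip hv1 (hPV2 v hvP)).elim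
    · rintro (⟨hvX, hv1⟩ | hvR)
      · exact ⟨Or.inl (Or.inl hvX), hv1⟩
      · exact ⟨Or.inl (Or.inr hvR), hRV1 v hvR⟩
  have hZV2 : Z ∩ V2 = (X ∩ V2) ∪ Pset := by
    ext v
    constructor
    · rintro ⟨(hvX | hvR) | hvP, hv2⟩
      · exact Or.inl ⟨hvX, hv2⟩
      · exact (bip_nb hbip (hRV1 v hvR) hv2).elim
      · exact Or.inr hvP
    · rintro (⟨hvX, hv2⟩ | hvP)
      · exact ⟨Or.inl (Or.inl hvX), hv2⟩
      · exact ⟨Or.inr hvP, hPV2 v hvP⟩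
  have hdis1 : Disjoint (X ∩ V1) Rset :=
    Set.disjoint_left.mpr fun v hv hvR => hRSH v hvR (hXsub hv.1)
  have hdis2 : Disjoint (X ∩ V2) Pset :=
    Set.disjoint_left.mpr fun v hv hvP => hPSH v hvP (hXsub hv.1)
  have hZcard : (Z ∩ V1).ncard = (Z ∩ V2).ncard + 1 := by
    rw [hZV1, hZV2, Set.ncard_union_eq hdis1 (Set.toFinite _) (Set.toFinite _),
      Set.ncard_union_eq hdis2 (Set.toFinite _) (Set.toFinite _), hcard, hRP]
    omega
  have hsplit : ((Z ∩ V1) \ E1).ncard + E1.ncard = (Z ∩ V1).ncard :=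
    Set.ncard_diff_add_ncard_of_subset hE1sub (Set.toFinite _)
  have himgcard : ((Z ∩ V1) \ E1).ncard = (Z ∩ V2).ncard := by
    rw [← hbij.image_eq, Set.ncard_image_of_injOn hbij.injOn]
  have hE1card : E1.ncard = 1 := by omega
  have hcutN : edgeCut B Z ∩ N = (fun v => s(v, f v)) '' E1 := by
    ext e
    constructor
    · rintro ⟨⟨heE, x, y, rfl, hxZ, hyZ⟩, heN⟩
      have hyfx : y = f x := hf2 x y heN
      have hx1 : x ∈ V1 := by
        rcases bip_mem hbip x with h1 | h2
        · exact h1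
        · exact absurd (hE2 x hxZ h2) (hyfx ▸ hyZ)
      exact ⟨x, ⟨hxZ, hx1, hyfx ▸ hyZ⟩, by rw [hyfx]⟩
    · rintro ⟨v, hv, rfl⟩
      exact ⟨⟨hN.1 _ (hf1 v), v, f v, rfl, hv.1, hv.2.2⟩, hf1 v⟩
  rw [hcutN, Set.ncard_image_of_injOn, hE1card]
  intro a haE b hbE hab
  rcases Sym2.eq_iff.mp hab with ⟨h1, _⟩ | ⟨h1, h2⟩
  · exact h1
  · exact absurd (h1 ▸ haE.1) hbE.2.2

private lemma card_cut {V : Type*} [Fintype V] [DecidableEq V] {B : SimpleGraph V}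
    {V1 V2 : Set V} (hbip : IsBipartitionOf B V1 V2) {H : SimpleGraph V} (hHsub : H ≤ B)
    {SH X : Set V} (hXsub : X ⊆ SH) {MH : Set (Sym2 V)} (hMH : IsPMOn H SH MH)
    {x₀ y₀ : V} (hx₀X : x₀ ∈ X) (hy₀X : y₀ ∉ X) (hx₀1 : x₀ ∈ V1)
    (hcut : edgeCut H X ∩ MH = {s(x₀, y₀)}) :
    (X ∩ V1).ncard = (X ∩ V2).ncard + 1 := by
  have hMHB : ∀ {u v : V}, s(u, v) ∈ MH → B.Adj u v := by
    intro u v h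
    exact hHsub (H.mem_edgeSet.mp (hMH.1 _ h))
  have he₀ : s(x₀, y₀) ∈ MH := by
    have hmem : s(x₀, y₀) ∈ edgeCut H X ∩ MH := by rw [hcut]; rfl
    exact hmem.2
  have hpart : ∀ v : V, ∃ u : V,
      v ∈ SH → s(v, u) ∈ MH ∧ u ∈ SH ∧ ∀ u', s(v, u') ∈ MH → u' = u := by
    intro v
    by_cases hv : v ∈ SH
    · obtain ⟨u, h1, h2, h3⟩ := pmOn_partner hMH hv
      exact ⟨u, fun _ => ⟨h1, h2, h3⟩⟩
    · exact ⟨v, fun h => absurd h hv⟩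
  choose fH hfH using hpart
  have huniq : ∀ {v u : V}, v ∈ SH → s(v, u) ∈ MH → fH v = u := by
    intro v u hv hu
    exact ((hfH v hv).2.2 u hu).symm
  have hfx₀ : fH x₀ = y₀ := huniq (hXsub hx₀X) he₀
  have hswap : ∀ v ∈ SH, s(fH v, v) ∈ MH := fun v hv => by
    rw [Sym2.eq_swap]; exact (hfH v hv).1
  have hstay : ∀ v ∈ X, v ≠ x₀ → fH v ∈ X := by
    intro v hv hvne
    by_contra hout
    have hcutmem : s(v, fH v) ∈ edgeCut H X ∩ MH :=
      ⟨⟨hMH.1 _ (hfH v (hXsub hv)).1, v, fH v, rfl, hv, hout⟩, (hfH v (hXsub hv)).1⟩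
    rw [hcut, Set.mem_singleton_iff] at hcutmem
    rcases Sym2.eq_iff.mp hcutmem with ⟨h1, _⟩ | ⟨h1, _⟩
    · exact hvne h1
    · exact hy₀X (h1 ▸ hv)
  have hbij : Set.BijOn fH ((X ∩ V1) \ {x₀}) (X ∩ V2) := by
    refine ⟨?_, ?_, ?_⟩
    · rintro v ⟨⟨hvX, hv1⟩, hvne⟩
      rw [Set.mem_singleton_iff] at hvne
      exact ⟨hstay v hvX hvne, bip_adj12 hbip (hMHB (hfH v (hXsub hvX)).1) hv1⟩
    · intro a ha b hb hab
      have haSH := hXsub ha.1.1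
      have hbSH := hXsub hb.1.1
      have h1 : s(fH a, a) ∈ MH := hswap a haSH
      have h2 : s(fH a, b) ∈ MH := by rw [hab]; exact hswap b hbSH
      have hfaSH : fH a ∈ SH := (hfH a haSH).2.1
      exact (huniq hfaSH h1).symm.trans (huniq hfaSH h2)
    · rintro u ⟨huX, hu2⟩
      have huSH := hXsub huX
      have hfu := (hfH u huSH).1
      have hfuSH := (hfH u huSH).2.1
      have hu_ne : u ≠ x₀ := fun h => bip_nb hbip (h.symm ▸ hx₀1) hu2
      have hfuX : fH u ∈ X := hstay u huX hu_ne
      have hfu1 : fH u ∈ V1 := bip_adj21 hbip (hMHB hfu) hu2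
      have hfune : fH u ∉ ({x₀} : Set V) := by
        rw [Set.mem_singleton_iff]
        intro h
        have hinv : fH (fH u) = u := huniq hfuSH (hswap u huSH)
        rw [h, hfx₀] at hinv
        exact hy₀X (hinv.symm ▸ huX)
      refine ⟨fH u, ⟨⟨hfuX, hfu1⟩, hfune⟩, huniq hfuSH (hswap u huSH)⟩
  have h1 : ((X ∩ V1) \ {x₀}).ncard + 1 = (X ∩ V1).ncard :=
    Set.ncard_diff_singleton_add_one ⟨hx₀X, hx₀1⟩ (Set.toFinite _)
  have h2 : ((X ∩ V1) \ {x₀}).ncard = (X ∩ V2).ncard := by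
    rw [← hbij.image_eq, Set.ncard_image_of_injOn hbij.injOn]
  omega

end Statement8Proof

/-- nontrivial tight cuts of `M`-conformal matching covered subgraphs of a
brace are linked by an internally `M`-conformal path between the two minorities. -/
theorem statement_8 {V : Type*} [Fintype V] [DecidableEq V] (B : SimpleGraph V)
    (V1 V2 : Set V) (hbip : IsBipartitionOf B V1 V2) (hbrace : IsBrace B)
    (M : Set (Sym2 V)) (hM : IsPM B M)
    (H : SimpleGraph V) (SH : Set V) (hHsub : H ≤ B) (hHon : EdgesWithin H SH)
    (hHmc : MatchingCoveredOn H SH)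
    (hHconf : MatchesExactly M H.edgeSet SH)
    (X : Set V) (hXsub : X ⊆ SH)
    (htight : IsTightCutOn H SH X)
    (hX2 : 2 ≤ X.ncard) (hX2' : 2 ≤ (SH \ X).ncard) :
    ∃ (p q : V) (P : B.Walk p q), P.IsPath ∧ InternallyMConformal B M P ∧
      (∀ z ∈ P.support, z ≠ p → z ≠ q → z ∉ SH) ∧
      p ∈ minority V1 V2 X ∧ q ∈ minority V1 V2 (SH \ X) := by
  classical
  have hMH : IsPMOn H SH (M ∩ H.edgeSet) := by
    refine ⟨fun e he => he.2, ?_, ?_⟩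
    · intro e he
      revert he
      induction e using Sym2.ind with
      | _ x y =>
        intro he v hv
        have hadj : H.Adj x y := H.mem_edgeSet.mp he.2
        rcases Sym2.mem_iff.mp hv with rfl | rfl
        · exact (hHon hadj).1
        · exact (hHon hadj).2
    · intro v hv
      obtain ⟨e, ⟨h1, h2, h3⟩, hu⟩ := hHconf v hv
      exact ⟨e, ⟨⟨h1, h2⟩, h3⟩, fun e' he' => hu e' ⟨he'.1.1, he'.1.2, he'.2⟩⟩
  have hcard1 := htight (M ∩ H.edgeSet) hMH
  obtain ⟨e₀, he₀⟩ := Set.ncard_eq_one.mp hcard1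
  have he₀mem : e₀ ∈ edgeCut H X ∩ (M ∩ H.edgeSet) := by rw [he₀]; rfl
  obtain ⟨⟨he₀E, x₀, y₀, he₀eq, hx₀X, hy₀X⟩, he₀MH⟩ := he₀mem
  subst he₀eq
  have hy₀SH : y₀ ∈ SH := hMH.2.1 _ he₀MH y₀ (Sym2.mem_mk_right x₀ y₀)
  have hx₀SH : x₀ ∈ SH := hXsub hx₀X
  have hadj₀ : B.Adj x₀ y₀ := hHsub (H.mem_edgeSet.mp he₀MH.2)
  have hin : ∀ v ∈ SH, ∀ u : V, s(v, u) ∈ M → u ∈ SH := by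
    intro v hv u hMu
    obtain ⟨e, ⟨h1, h2, h3⟩, _⟩ := hHconf v hv
    have heq : s(v, u) = e := pm_unique_edge hM h1 h3 hMu (Sym2.mem_mk_left v u)
    exact hMH.2.1 e ⟨h1, h2⟩ u (heq ▸ Sym2.mem_mk_right v u)
  have hy₀Y : y₀ ∈ SH \ X := ⟨hy₀SH, hy₀X⟩
  have hx₀Y : x₀ ∉ SH \ X := fun hc => hc.2 hx₀X
  have hcutY : edgeCut H (SH \ X) ∩ (M ∩ H.edgeSet) = {s(y₀, x₀)} := by
    have hXY : edgeCut H (SH \ X) ∩ (M ∩ H.edgeSet) = edgeCut H X ∩ (M ∩ H.edgeSet) := by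
      ext e
      constructor
      · rintro ⟨⟨heE, x, y, rfl, hx, hy⟩, heM⟩
        have hySH : y ∈ SH := hMH.2.1 _ heM y (Sym2.mem_mk_right x y)
        have hyX : y ∈ X := by
          by_contra hcc
          exact hy ⟨hySH, hcc⟩
        exact ⟨⟨heE, y, x, Sym2.eq_swap, hyX, hx.2⟩, heM⟩
      · rintro ⟨⟨heE, x, y, rfl, hx, hy⟩, heM⟩
        have hySH : y ∈ SH := hMH.2.1 _ heM y (Sym2.mem_mk_right x y)
        exact ⟨⟨heE, y, x, Sym2.eq_swap, ⟨hySH, hy⟩, fun hc => hc.2 hx⟩, heM⟩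
    rw [hXY, he₀, Sym2.eq_swap]
  rcases bip_mem hbip x₀ with hx₀1 | hx₀2
  · have hcardX : (X ∩ V1).ncard = (X ∩ V2).ncard + 1 :=
      card_cut hbip hHsub hXsub hMH hx₀X hy₀X hx₀1 he₀
    have hy₀2 : y₀ ∈ V2 := bip_adj12 hbip hadj₀ hx₀1
    have hcardY : ((SH \ X) ∩ V2).ncard = ((SH \ X) ∩ V1).ncard + 1 :=
      card_cut (bip_symm' hbip) hHsub Set.diff_subset hMH hy₀Y hx₀Y hy₀2 hcutY
    obtain ⟨p, q, P, h1, h2, h3, hp, hq⟩ :=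
      aux_main B V1 V2 hbip hbrace M hM SH X hXsub hin hX2 hX2' hcardX
    refine ⟨p, q, P, h1, h2, h3, ?_, ?_⟩
    · unfold minority
      rw [if_neg (by omega)]
      exact hp
    · unfold minority
      rw [if_pos (by omega)]
      exact hq
  · have hbip2 := bip_symm' hbip
    have hcardX : (X ∩ V2).ncard = (X ∩ V1).ncard + 1 :=
      card_cut hbip2 hHsub hXsub hMH hx₀X hy₀X hx₀2 he₀
    have hy₀1 : y₀ ∈ V1 := bip_adj12 hbip2 hadj₀ hx₀2
    have hcardY : ((SH \ X) ∩ V1).ncard = ((SH \ X) ∩ V2).ncard + 1 :=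
      card_cut hbip hHsub Set.diff_subset hMH hy₀Y hx₀Y hy₀1 hcutY
    obtain ⟨p, q, P, h1, h2, h3, hp, hq⟩ :=
      aux_main B V2 V1 hbip2 hbrace M hM SH X hXsub hin hX2 hX2' hcardX
    refine ⟨p, q, P, h1, h2, h3, ?_, ?_⟩
    · unfold minority
      rw [if_pos (by omega)]
      exact hp
    · unfold minority
      rw [if_neg (by omega)]
      exact hq

end Paper
end

section
/- Let B be a bipartite matching covered graph, X ⊆ V(B) such that ∂(X) is a non-trivial tight cut in B, and M a perfect matching of B. If P is an internally M-conformal path with both endpoints in X such that E(P) ∩ ∂(X) ≠ ∅, then E(P) ∩ ∂(X) ∩ M ≠ ∅ and |E(P) ∩ ∂(X)| = 2. -/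
namespace Paper

open SimpleGraph

variable {V : Type*} {W : Type*}

/-! ### Auxiliary lemmas for `statement_9` -/

private lemma mem_edges_iff_getVert {G : SimpleGraph V} {u v : V} (P : G.Walk u v) {e : Sym2 V} :
    e ∈ P.edges ↔ ∃ i, i < P.length ∧ e = s(P.getVert i, P.getVert (i+1)) := by
  induction P with
  | nil => simp
  | cons h p ih =>
    simp only [Walk.edges_cons, List.mem_cons, ih, Walk.length_cons]
    constructor
    · rintro (rfl | ⟨i, hi, rfl⟩)
      · exact ⟨0, Nat.succ_pos _, by simp [Walk.getVert_cons]⟩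
      · exact ⟨i+1, by omega, by simp⟩
    · rintro ⟨i, hi, rfl⟩
      cases i with
      | zero => left; simp [Walk.getVert_cons]
      | succ j => right; exact ⟨j, by omega, by simp⟩

private lemma getVert_injOn_path {G : SimpleGraph V} {u v : V} {P : G.Walk u v}
    (hP : P.IsPath) : ∀ i, i ≤ P.length → ∀ j, j ≤ P.length →
      P.getVert i = P.getVert j → i = j := by
  induction P with
  | nil => intro i hi j hj _; simp only [Walk.length_nil, Nat.le_zero] at hi hj; omega
  | cons h p ih =>
    rw [Walk.cons_isPath_iff] at hP
    intro i hi j hj hij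
    simp only [Walk.length_cons] at hi hj
    cases i with
    | zero => cases j with
      | zero => rfl
      | succ t =>
        exfalso; apply hP.2
        rw [Walk.mem_support_iff_exists_getVert]
        refine ⟨t, ?_, by omega⟩
        simpa using hij.symm
    | succ s => cases j with
      | zero =>
        exfalso; apply hP.2
        rw [Walk.mem_support_iff_exists_getVert]
        refine ⟨s, ?_, by omega⟩
        simpa using hij
      | succ t =>
        have := ih hP.1 s (by omega) t (by omega) (by simpa using hij)
        omega

private lemma toggle_count (g : ℕ → Bool) (k : ℕ) :
    ((Finset.range k).filter (fun i => g i = true ∧ g (i+1) = false)).card + (g k).toNat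
      = ((Finset.range k).filter (fun i => g i = false ∧ g (i+1) = true)).card + (g 0).toNat := by
  induction k with
  | zero => simp
  | succ n ih =>
    rw [Finset.range_add_one, Finset.filter_insert, Finset.filter_insert]
    have hn : n ∉ Finset.range n := by simp
    by_cases h1 : g n = true <;> by_cases h2 : g (n+1) = true <;>
      simp_all [Finset.card_insert_of_notMem, Finset.mem_filter] <;> omega

private lemma tight_count {G : SimpleGraph V} [Fintype V] {X V1 V2 : Set V}
    (hdisj : Disjoint V1 V2)
    (hadjb : ∀ ⦃x y : V⦄, G.Adj x y → (x ∈ V1 ↔ y ∈ V2))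
    {N : Set (Sym2 V)} (hN : IsPM G N)
    (h1 : (edgeCut G X ∩ N).ncard = 1) {a b : V}
    (habN : s(a, b) ∈ N) (haX : a ∈ X) (hbX : b ∉ X) (haV : a ∈ V1) :
    (X ∩ V1).ncard = (X ∩ V2).ncard + 1 := by
  classical
  obtain ⟨hNE, -, hNcov⟩ := hN
  have habE : s(a, b) ∈ G.edgeSet := hNE _ habN
  have habC : s(a, b) ∈ edgeCut G X := ⟨habE, a, b, rfl, haX, hbX⟩
  have hcutset : edgeCut G X ∩ N = {s(a, b)} := by
    obtain ⟨f, hf⟩ := Set.ncard_eq_one.mp h1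
    have hmem : s(a, b) ∈ ({f} : Set (Sym2 V)) := hf ▸ ⟨habC, habN⟩
    rw [Set.mem_singleton_iff] at hmem
    rw [hf, hmem]
  have huniq : ∀ x : V, ∀ e ∈ N, x ∈ e → ∀ f ∈ N, x ∈ f → e = f := by
    intro x e he hxe f hf hxf
    obtain ⟨g, -, hg⟩ := hNcov x (Set.mem_univ x)
    rw [hg e ⟨he, hxe⟩, hg f ⟨hf, hxf⟩]
  have hcov : ∀ v : V, ∃ e, e ∈ N ∧ v ∈ e := fun v => (hNcov v (Set.mem_univ v)).exists
  choose F hFN hFv using hcov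
  set m : V → V := fun v => Sym2.Mem.other' (hFv v) with hm
  have hsm : ∀ v, s(v, m v) = F v := fun v => Sym2.other_spec' (hFv v)
  have hadjm : ∀ v, G.Adj v (m v) := by
    intro v
    have h := hNE _ (hFN v)
    rw [← hsm v] at h
    exact h
  have hmm : ∀ v, m (m v) = v := by
    intro v
    have h1' : F (m v) = F v :=
      huniq (m v) (F (m v)) (hFN _) (hFv _) (F v) (hFN _)
        (by rw [← hsm v]; exact Sym2.mem_mk_right _ _)
    have h2' : s(m v, m (m v)) = s(v, m v) := by rw [hsm (m v), h1', ← hsm v]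
    rcases Sym2.eq_iff.mp h2' with ⟨h3, h4⟩ | ⟨h3, h4⟩
    · exact absurd h3 (hadjm v).ne'
    · exact h4
  have hnotV2 : ∀ x ∈ V1, x ∉ V2 := fun x hx hx2 => (Set.disjoint_left.mp hdisj hx) hx2
  have hXm : ∀ v, v ∈ X → v ≠ a → m v ∈ X ∧ m v ≠ a := by
    intro v hv hva
    have hmXa : m v ≠ a := by
      intro hma
      have hFva : F v = s(a, b) := by
        apply huniq a _ (hFN v) _ _ habN (Sym2.mem_mk_left _ _)
        rw [← hsm v, hma]; exact Sym2.mem_mk_right _ _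
      have hvm : v ∈ s(a, b) := hFva ▸ hFv v
      rcases Sym2.mem_iff.mp hvm with rfl | rfl
      · exact hva rfl
      · exact hbX hv
    refine ⟨?_, hmXa⟩
    by_contra hmv
    have hc : s(v, m v) ∈ edgeCut G X ∩ N :=
      ⟨⟨by rw [hsm]; exact hNE _ (hFN v), v, m v, rfl, hv, hmv⟩, by rw [hsm]; exact hFN v⟩
    rw [hcutset, Set.mem_singleton_iff] at hc
    rcases Sym2.eq_iff.mp hc with ⟨h3, h4⟩ | ⟨h3, h4⟩
    · exact hva h3
    · exact hmXa h4
  have hclassm : ∀ v, v ∈ V1 → m v ∈ V2 := fun v hv => (hadjb (hadjm v)).mp hv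
  have hclassm2 : ∀ v, v ∈ V2 → m v ∈ V1 := fun v hv => (hadjb (hadjm v).symm).mpr hv
  have hbij : Set.BijOn m ((X \ {a}) ∩ V1) ((X \ {a}) ∩ V2) := by
    refine ⟨?_, ?_, ?_⟩
    · rintro v ⟨⟨hvX, hva⟩, hv1⟩
      have h := hXm v hvX (by simpa using hva)
      exact ⟨⟨h.1, by simp [h.2]⟩, hclassm v hv1⟩
    · intro v _ w _ h
      rw [← hmm v, h, hmm w]
    · rintro w ⟨⟨hwX, hwa⟩, hw2⟩
      have h := hXm w hwX (by simpa using hwa)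
      exact ⟨m w, ⟨⟨h.1, by simp [h.2]⟩, hclassm2 w hw2⟩, hmm w⟩
  have hcard : ((X \ {a}) ∩ V1).ncard = ((X \ {a}) ∩ V2).ncard := by
    rw [← hbij.image_eq, Set.ncard_image_of_injOn hbij.injOn]
  have e1 : X ∩ V1 = insert a ((X \ {a}) ∩ V1) := by
    ext x
    simp only [Set.mem_inter_iff, Set.mem_insert_iff, Set.mem_diff, Set.mem_singleton_iff]
    constructor
    · rintro ⟨hx, hx1⟩
      by_cases h : x = a
      · exact Or.inl h
      · exact Or.inr ⟨⟨hx, h⟩, hx1⟩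
    · rintro (rfl | ⟨⟨hx, -⟩, hx1⟩)
      exacts [⟨haX, haV⟩, ⟨hx, hx1⟩]
  have e2 : X ∩ V2 = (X \ {a}) ∩ V2 := by
    ext x
    simp only [Set.mem_inter_iff, Set.mem_diff, Set.mem_singleton_iff]
    constructor
    · rintro ⟨hx, hx2⟩
      exact ⟨⟨hx, fun h => hnotV2 a haV (h ▸ hx2)⟩, hx2⟩
    · rintro ⟨⟨hx, -⟩, hx2⟩; exact ⟨hx, hx2⟩
  rw [e1, e2, Set.ncard_insert_of_notMem (by simp) (Set.toFinite _), hcard]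

private lemma cut_end_V1 {G : SimpleGraph V} [Fintype V] {X V1 V2 : Set V}
    (hdisj : Disjoint V1 V2) (huniv : V1 ∪ V2 = Set.univ)
    (hadjb : ∀ ⦃x y : V⦄, G.Adj x y → (x ∈ V1 ↔ y ∈ V2))
    {N : Set (Sym2 V)} (hN : IsPM G N) (h1 : (edgeCut G X ∩ N).ncard = 1)
    {a b : V} (habN : s(a, b) ∈ N) (haX : a ∈ X) (hbX : b ∉ X) :
    (a ∈ V1 ↔ (X ∩ V1).ncard = (X ∩ V2).ncard + 1) := by
  have hadjb' : ∀ ⦃x y : V⦄, G.Adj x y → (x ∈ V2 ↔ y ∈ V1) :=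
    fun x y hxy => (hadjb hxy.symm).symm
  have hV2 : a ∈ V2 → (X ∩ V2).ncard = (X ∩ V1).ncard + 1 := fun h =>
    tight_count hdisj.symm hadjb' hN h1 habN haX hbX h
  have ha12 : a ∈ V1 ∨ a ∈ V2 := by
    have h : a ∈ V1 ∪ V2 := huniv ▸ Set.mem_univ a
    exact h
  constructor
  · exact fun h => tight_count hdisj hadjb hN h1 habN haX hbX h
  · intro h
    rcases ha12 with h' | h'
    · exact h'
    · exfalso; have h2 := hV2 h'; omega

set_option maxHeartbeats 2000000 in
/-- an internally `M`-conformal path with both endpoints in the shore `X`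
of a nontrivial tight cut crosses the cut exactly twice, once with a matching edge. -/
theorem statement_9 {V : Type*} [Fintype V] [DecidableEq V] (B : SimpleGraph V)
    (hbip : IsBipartite B) (hmc : MatchingCovered B)
    (X : Set V) (htight : IsTightCut B X)
    (hX2 : 2 ≤ X.ncard) (hX2' : 2 ≤ (Set.univ \ X).ncard)
    (M : Set (Sym2 V)) (hM : IsPM B M)
    {p q : V} (hp : p ∈ X) (hq : q ∈ X)
    (P : B.Walk p q) (hP : P.IsPath) (hPconf : InternallyMConformal B M P)
    (hne : ({f | f ∈ P.edges} ∩ edgeCut B X).Nonempty) :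
    ({f | f ∈ P.edges} ∩ edgeCut B X ∩ M).Nonempty ∧
      ({f | f ∈ P.edges} ∩ edgeCut B X).ncard = 2 := by
  classical
  obtain ⟨V1, V2, hdisj, huniv, hadjb⟩ := hbip
  have hinj := getVert_injOn_path hP
  have hv0 : P.getVert 0 = p := P.getVert_zero
  have hvk : P.getVert P.length = q := P.getVert_length
  have hadjP : ∀ i, i < P.length → B.Adj (P.getVert i) (P.getVert (i + 1)) :=
    fun i hi => P.adj_getVert_succ hi
  -- crossing characterization of cut edges of the path
  have hcutIff : ∀ i, i < P.length →
      (s(P.getVert i, P.getVert (i+1)) ∈ edgeCut B X ↔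
        ¬(P.getVert i ∈ X ↔ P.getVert (i+1) ∈ X)) := by
    intro i hi
    constructor
    · rintro ⟨-, x, y, hxy, hxX, hyX⟩
      rcases Sym2.eq_iff.mp hxy with ⟨h1, h2⟩ | ⟨h1, h2⟩ <;> subst h1 <;> subst h2 <;> tauto
    · intro h
      by_cases hx : P.getVert i ∈ X
      · exact ⟨B.mem_edgeSet.mpr (hadjP i hi), _, _, rfl, hx, by tauto⟩
      · exact ⟨B.mem_edgeSet.mpr (hadjP i hi), P.getVert (i+1), P.getVert i, Sym2.eq_swap,
          by tauto, hx⟩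
  -- uniqueness of matching edges at a vertex
  have hMuniq : ∀ x : V, ∀ e ∈ M, x ∈ e → ∀ f ∈ M, x ∈ f → e = f := by
    intro x e he hxe f hf hxf
    obtain ⟨g, -, hg⟩ := hM.2.2 x (Set.mem_univ x)
    rw [hg e ⟨he, hxe⟩, hg f ⟨hf, hxf⟩]
  -- internal matching edge at each internal vertex of the path
  have hmatch : ∀ i, 0 < i → i < P.length → ∃ e, e ∈ M ∧ e ∈ P.edges ∧
      (∀ y ∈ e, y ∈ P.support ∧ y ≠ p ∧ y ≠ q) ∧ P.getVert i ∈ e := by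
    intro i h0 hik
    have hsup : P.getVert i ∈ P.support :=
      Walk.mem_support_iff_exists_getVert.mpr ⟨i, rfl, by omega⟩
    have hnp : P.getVert i ≠ p := fun h => by
      have := hinj i (by omega) 0 (by omega) (by rw [h, hv0])
      omega
    have hnq : P.getVert i ≠ q := fun h => by
      have := hinj i (by omega) P.length le_rfl (by rw [h, hvk])
      omega
    obtain ⟨e, he, -⟩ := hPconf (P.getVert i) ⟨hsup, hnp, hnq⟩
    exact ⟨e, he.1, he.2.1, he.2.2.1, he.2.2.2⟩
  -- index of an edge of the path containing a given vertex
  have hidx : ∀ i, i ≤ P.length → ∀ j, j < P.length →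
      P.getVert i ∈ s(P.getVert j, P.getVert (j+1)) → i = j ∨ i = j + 1 := by
    intro i hi j hj hmem
    rcases Sym2.mem_iff.mp hmem with h | h
    · exact Or.inl (hinj i hi j (by omega) h)
    · exact Or.inr (hinj i hi (j+1) (by omega) h)
  -- a crossing edge of the path exists
  obtain ⟨f0, hf0P, hf0C⟩ := hne
  obtain ⟨c, hck, rfl⟩ := (mem_edges_iff_getVert P).mp hf0P
  have hk2 : 2 ≤ P.length := by
    by_contra h
    have hl1 : P.length = 1 := by omega
    have hcr := (hcutIff c hck).mp hf0C
    have hc0 : c = 0 := by omega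
    subst hc0
    rw [hv0, show (0:ℕ)+1 = P.length by omega, hvk] at hcr
    exact hcr (by tauto)
  have h1M : s(P.getVert 1, P.getVert 2) ∈ M := by
    obtain ⟨e, heM, heP, heA, hev⟩ := hmatch 1 one_pos (by omega)
    obtain ⟨j, hj, rfl⟩ := (mem_edges_iff_getVert P).mp heP
    rcases hidx 1 (by omega) j hj hev with h | h
    · rw [← h] at heM
      simpa using heM
    · exfalso
      have hj0 : j = 0 := by omega
      subst hj0
      exact (heA (P.getVert 0) (Sym2.mem_mk_left _ _)).2.1 hv0
  -- edges of the path are matching edges exactly at odd positions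
  have key : ∀ i, i < P.length → (s(P.getVert i, P.getVert (i+1)) ∈ M ↔ Odd i) := by
    intro i
    induction i using Nat.strong_induction_on with
    | _ i ih =>
      intro hik
      rcases i with _ | _ | n
      · refine iff_of_false ?_ (by decide)
        intro h0
        have hne01 : s(P.getVert 0, P.getVert (0+1)) ≠ s(P.getVert 1, P.getVert 2) := by
          intro h
          rcases Sym2.eq_iff.mp h with ⟨ha, hb⟩ | ⟨ha, hb⟩
          · have := hinj 0 (by omega) 1 (by omega) ha; omega
          · have := hinj 0 (by omega) 2 (by omega) ha; omega
        refine hne01 (hMuniq (P.getVert 1) _ h0 ?_ _ h1M (Sym2.mem_mk_left _ _))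
        exact Sym2.mem_mk_right _ _
      · refine iff_of_true ?_ (by decide)
        simpa using h1M
      · by_cases hpar : Odd (n+2)
        · refine iff_of_true ?_ (by simpa using hpar)
          obtain ⟨e, heM, heP, heA, hev⟩ := hmatch (n+2) (by omega) (by omega)
          obtain ⟨j, hj, rfl⟩ := (mem_edges_iff_getVert P).mp heP
          rcases hidx (n+2) (by omega) j hj hev with h | h
          · rw [← h] at heM
            simpa using heM
          · exfalso
            have hj1 : j = n+1 := by omega
            subst hj1
            have hodd := (ih (n+1) (by omega) (by omega)).mp heM
            rw [Nat.odd_iff] at hodd hpar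
            omega
        · refine iff_of_false ?_ (by simpa using hpar)
          intro hM2
          have hM1 : s(P.getVert (n+1), P.getVert (n+1+1)) ∈ M :=
            (ih (n+1) (by omega) (by omega)).mpr
              (by rw [Nat.odd_iff] at hpar ⊢; omega)
          have hne12 : s(P.getVert (n+1), P.getVert (n+1+1))
              ≠ s(P.getVert (n+1+1), P.getVert (n+1+1+1)) := by
            intro h
            rcases Sym2.eq_iff.mp h with ⟨ha, hb⟩ | ⟨ha, hb⟩
            · have := hinj (n+1) (by omega) (n+2) (by omega) (by simpa using ha); omega
            · have := hinj (n+1) (by omega) (n+3) (by omega) (by simpa using ha); omega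
          refine hne12 (hMuniq (P.getVert (n+1+1)) _ hM1 (Sym2.mem_mk_right _ _) _ ?_
            (Sym2.mem_mk_left _ _))
          simpa using hM2
  -- vertices of V1 appear exactly at positions of a fixed parity
  have hmemV : ∀ x : V, x ∈ V1 ↔ x ∉ V2 := by
    intro x
    have hx : x ∈ V1 ∪ V2 := huniv ▸ Set.mem_univ x
    constructor
    · intro h1 h2; exact (Set.disjoint_left.mp hdisj h1) h2
    · intro h2
      rcases hx with h | h
      · exact h
      · exact absurd h h2
  have hclass : ∀ i, i ≤ P.length → (P.getVert i ∈ V1 ↔ (Even i ↔ p ∈ V1)) := by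
    intro i
    induction i with
    | zero => intro _; simp [hv0]
    | succ n ihn =>
      intro hn
      have hA := hadjb (hadjP n (by omega))
      have h2 := hmemV (P.getVert (n+1))
      have h3 := ihn (by omega)
      have h4 : Even (n+1) ↔ ¬ Even n := by simp [Nat.even_add_one]
      tauto
  -- every crossing's X-side endpoint has a class determined by the cut
  have hXend : ∀ i, i < P.length → ¬(P.getVert i ∈ X ↔ P.getVert (i+1) ∈ X) →
      ((P.getVert i ∈ X → (P.getVert i ∈ V1 ↔ (X ∩ V1).ncard = (X ∩ V2).ncard + 1)) ∧
       (P.getVert (i+1) ∈ X →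
         (P.getVert (i+1) ∈ V1 ↔ (X ∩ V1).ncard = (X ∩ V2).ncard + 1))) := by
    intro i hik hcr
    have heE : s(P.getVert i, P.getVert (i+1)) ∈ B.edgeSet :=
      B.mem_edgeSet.mpr (hadjP i hik)
    obtain ⟨N, hN, heN⟩ := hmc.2.2 _ heE
    have hN1 : (edgeCut B X ∩ N).ncard = 1 := htight N hN
    constructor
    · intro hiX
      exact cut_end_V1 hdisj huniv hadjb hN hN1 heN hiX (by tauto)
    · intro hi1X
      have heN' : s(P.getVert (i+1), P.getVert i) ∈ N := by rwa [Sym2.eq_swap]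
      exact cut_end_V1 hdisj huniv hadjb hN hN1 heN' hi1X (by tauto)
  -- the crossing index sets
  set g : ℕ → Bool := fun i => decide (P.getVert i ∈ X) with hg
  set Sout := (Finset.range P.length).filter (fun i => g i = true ∧ g (i+1) = false)
    with hSoutDef
  set Sin := (Finset.range P.length).filter (fun i => g i = false ∧ g (i+1) = true)
    with hSinDef
  have hmemSout : ∀ i, i ∈ Sout ↔
      i < P.length ∧ P.getVert i ∈ X ∧ P.getVert (i+1) ∉ X := by
    intro i
    rw [hSoutDef, Finset.mem_filter, Finset.mem_range, hg]
    simp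
  have hmemSin : ∀ i, i ∈ Sin ↔
      i < P.length ∧ P.getVert i ∉ X ∧ P.getVert (i+1) ∈ X := by
    intro i
    rw [hSinDef, Finset.mem_filter, Finset.mem_range, hg]
    simp
  have hcardEq : Sout.card = Sin.card := by
    have h := toggle_count g P.length
    rw [← hSoutDef, ← hSinDef] at h
    have h0 : g 0 = true := by rw [hg]; simp [hv0, hp]
    have hk' : g P.length = true := by rw [hg]; simp [hvk, hq]
    rw [h0, hk'] at h
    simpa using h
  have hcmem : c ∈ Sout ∪ Sin := by
    have hcr := (hcutIff c hck).mp hf0C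
    rw [Finset.mem_union, hmemSout c, hmemSin c]
    by_cases hx : P.getVert c ∈ X
    · left; exact ⟨hck, hx, by tauto⟩
    · right; exact ⟨hck, hx, by tauto⟩
  have hparOut : ∀ i ∈ Sout,
      (Even i ↔ ((p ∈ V1) ↔ (X ∩ V1).ncard = (X ∩ V2).ncard + 1)) := by
    intro i hi
    rw [hmemSout i] at hi
    obtain ⟨hik, hiX, hi1X⟩ := hi
    have hcr : ¬(P.getVert i ∈ X ↔ P.getVert (i+1) ∈ X) := by tauto
    have h1 := (hXend i hik hcr).1 hiX
    have h2 := hclass i (by omega)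
    tauto
  have hparIn : ∀ i ∈ Sin,
      (Even i ↔ ¬((p ∈ V1) ↔ (X ∩ V1).ncard = (X ∩ V2).ncard + 1)) := by
    intro i hi
    rw [hmemSin i] at hi
    obtain ⟨hik, hiX, hi1X⟩ := hi
    have hcr : ¬(P.getVert i ∈ X ↔ P.getVert (i+1) ∈ X) := by tauto
    have h1 := (hXend i hik hcr).2 hi1X
    have h2 := hclass (i+1) (by omega)
    have h3 : Even (i+1) ↔ ¬ Even i := by simp [Nat.even_add_one]
    tauto
  -- injectivity of the edge map on indices
  have hefinj : Set.InjOn (fun i => s(P.getVert i, P.getVert (i+1)))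
      ↑(Finset.range P.length) := by
    intro i hi j hj hij
    simp only [Finset.coe_range, Set.mem_Iio] at hi hj
    simp only at hij
    rcases Sym2.eq_iff.mp hij with ⟨h1, h2⟩ | ⟨h1, h2⟩
    · exact hinj i (by omega) j (by omega) h1
    · have e1 := hinj i (by omega) (j+1) (by omega) h1
      have e2 := hinj (i+1) (by omega) j (by omega) h2
      omega
  -- the finishing argument
  have main : ∀ S1 S2 : Finset ℕ, S1 ∪ S2 = Sout ∪ Sin → Disjoint S1 S2 →
      S1.card = S2.card → (∀ i ∈ S1, Odd i) →
      (({f | f ∈ P.edges} ∩ edgeCut B X ∩ M).Nonempty ∧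
        ({f | f ∈ P.edges} ∩ edgeCut B X).ncard = 2) := by
    intro S1 S2 hun hd12 hc12 hodd1
    have hunSub : ∀ i ∈ Sout ∪ Sin,
        i < P.length ∧ ¬(P.getVert i ∈ X ↔ P.getVert (i+1) ∈ X) := by
      intro i hi
      rw [Finset.mem_union, hmemSout i, hmemSin i] at hi
      constructor
      · tauto
      · tauto
    have hS1sub : ∀ i ∈ S1, i ∈ Sout ∪ Sin := fun i hi =>
      hun ▸ Finset.mem_union_left _ hi
    have hS1M : ∀ i ∈ S1, s(P.getVert i, P.getVert (i+1)) ∈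
        {f | f ∈ P.edges} ∩ edgeCut B X ∩ M := by
      intro i hi
      obtain ⟨hik, hcr⟩ := hunSub i (hS1sub i hi)
      exact ⟨⟨(mem_edges_iff_getVert P).mpr ⟨i, hik, rfl⟩, (hcutIff i hik).mpr hcr⟩,
        (key i hik).mpr (hodd1 i hi)⟩
    have hS1range : (↑S1 : Set ℕ) ⊆ ↑(Finset.range P.length) := by
      intro i hi
      simp only [Finset.mem_coe, Finset.coe_range, Set.mem_Iio] at hi ⊢
      exact (hunSub i (hS1sub i hi)).1
    have hsubM : ↑(S1.image (fun i => s(P.getVert i, P.getVert (i+1))))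
        ⊆ edgeCut B X ∩ M := by
      intro f hf
      simp only [Finset.coe_image, Set.mem_image, Finset.mem_coe] at hf
      obtain ⟨i, hi, rfl⟩ := hf
      exact ⟨(hS1M i hi).1.2, (hS1M i hi).2⟩
    have hS1le : S1.card ≤ 1 := by
      have h2 := Set.ncard_le_ncard hsubM (Set.toFinite _)
      rw [Set.ncard_coe_finset, htight M hM,
        Finset.card_image_of_injOn (hefinj.mono hS1range)] at h2
      exact h2
    have hS1card : S1.card = 1 := by
      rcases Nat.lt_or_ge S1.card 1 with hlt | hge
      · exfalso
        have h1 : S1 = ∅ := Finset.card_eq_zero.mp (by omega)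
        have h2 : S2 = ∅ := Finset.card_eq_zero.mp (by omega)
        rw [h1, h2, Finset.empty_union] at hun
        rw [← hun] at hcmem
        simp at hcmem
      · omega
    obtain ⟨i0, hi0⟩ := Finset.card_pos.mp (by omega : 0 < S1.card)
    refine ⟨⟨_, hS1M i0 hi0⟩, ?_⟩
    have hUnionRange : (↑(Sout ∪ Sin) : Set ℕ) ⊆ ↑(Finset.range P.length) := by
      intro i hi
      simp only [Finset.mem_coe, Finset.coe_range, Set.mem_Iio] at hi ⊢
      exact (hunSub i hi).1
    have hEq : {f | f ∈ P.edges} ∩ edgeCut B X =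
        ↑((Sout ∪ Sin).image (fun i => s(P.getVert i, P.getVert (i+1)))) := by
      ext f
      simp only [Set.mem_inter_iff, Set.mem_setOf_eq, Finset.coe_image, Set.mem_image,
        Finset.mem_coe]
      constructor
      · rintro ⟨hfP, hfC⟩
        obtain ⟨i, hik, rfl⟩ := (mem_edges_iff_getVert P).mp hfP
        refine ⟨i, ?_, rfl⟩
        have hcr := (hcutIff i hik).mp hfC
        rw [Finset.mem_union, hmemSout i, hmemSin i]
        by_cases hx : P.getVert i ∈ X
        · left; exact ⟨hik, hx, by tauto⟩
        · right; exact ⟨hik, hx, by tauto⟩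
      · rintro ⟨i, hi, rfl⟩
        obtain ⟨hik, hcr⟩ := hunSub i hi
        exact ⟨(mem_edges_iff_getVert P).mpr ⟨i, hik, rfl⟩, (hcutIff i hik).mpr hcr⟩
    rw [hEq, Set.ncard_coe_finset,
      Finset.card_image_of_injOn (hefinj.mono hUnionRange), ← hun,
      Finset.card_union_of_disjoint hd12]
    omega
  by_cases hb0 : ((p ∈ V1) ↔ (X ∩ V1).ncard = (X ∩ V2).ncard + 1)
  · refine main Sin Sout (Finset.union_comm _ _) ?_ hcardEq.symm ?_
    · rw [Finset.disjoint_left]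
      intro i h1 h2
      rw [hmemSin i] at h1
      rw [hmemSout i] at h2
      tauto
    · intro i hi
      have h := hparIn i hi
      rw [← Nat.not_even_iff_odd]
      tauto
  · refine main Sout Sin rfl ?_ hcardEq ?_
    · rw [Finset.disjoint_left]
      intro i h1 h2
      rw [hmemSout i] at h1
      rw [hmemSin i] at h2
      tauto
    · intro i hi
      have h := hparOut i hi
      rw [← Nat.not_even_iff_odd]
      tauto

end Paper
end
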